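/- Let P, 𝔞, 𝔉 be as in the Chagrov encoding and let AxP be the conjunction of the formulas AxI over all instructions I ∈ P (with ∃ the universal diamond over 𝔉). Then 𝔉 ⊨ AxP. -/

import Mathlib

/-- Modal formulas with a box □ and the universal modality ∀ (ubox). -/
inductive MFU : Type where
  | var : Nat → MFU
  | bot : MFU
  | neg : MFU → MFU
  | and : MFU → MFU → MFU
  | box : MFU → MFU
  | ubox : MFU → MFU

namespace MFU
def top : MFU := neg bot
def or (φ ψ : MFU) : MFU := neg (and (neg φ) (neg ψ))
def imp (φ ψ : MFU) : MFU := or (neg φ) ψ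
def dia (φ : MFU) : MFU := neg (box (neg φ))
/-- ∃φ, the universal diamond. -/
def uEx (φ : MFU) : MFU := neg (ubox (neg φ))
def subst (σ : Nat → MFU) : MFU → MFU
  | .var n => σ n
  | .bot => .bot
  | .neg φ => .neg (subst σ φ)
  | .and φ ψ => .and (subst σ φ) (subst σ ψ)
  | .box φ => .box (subst σ φ)
  | .ubox φ => .ubox (subst σ φ)
end MFU

/-- Truth at a point of a Kripke model, with ∀ interpreted by W × W. -/
def satU {W : Type} (R : W → W → Prop) (V : Nat → W → Prop) : W → MFU → Prop
  | x, .var n => V n x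
  | _, .bot => False
  | x, .neg φ => ¬ satU R V x φ
  | x, .and φ ψ => satU R V x φ ∧ satU R V x ψ
  | x, .box φ => ∀ y, R x y → satU R V y φ
  | _, .ubox φ => ∀ y, satU R V y φ
namespace MFU
/- The variable-free Chagrov formulas (in the language with the universal modality). -/
def fα : MFU := and (dia top) (box (dia top))
def fβ : MFU := box bot
def fγ : MFU := and (dia fα) (and (dia fβ) (neg (dia (dia fβ))))
def fδ : MFU := and (neg fγ) (and (dia fβ) (neg (dia (dia fβ))))
def fδ₁ : MFU := and (dia fδ) (neg (dia (dia fδ)))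
def fδ₂ : MFU := and (dia fδ₁) (neg (dia (dia fδ₁)))
def fγ₁ : MFU := and (dia fγ) (and (neg (dia (dia fγ))) (neg (dia fδ)))
def fγ₂ : MFU := and (dia fγ₁) (and (neg (dia (dia fγ₁))) (neg (dia fδ)))
def α₀ : Nat → MFU
  | 0 => and (dia fγ) (and (dia fδ) (and (neg (dia (dia fγ))) (neg (dia (dia fδ)))))
  | 1 => and (dia fγ₁) (and (dia fδ₁) (and (neg (dia (dia fγ₁))) (neg (dia (dia fδ₁)))))
  | 2 => and (dia fγ₂) (and (dia fδ₂) (and (neg (dia (dia fγ₂))) (neg (dia (dia fδ₂)))))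
  | _ => bot
def others (i : Nat) : MFU :=
  ((((List.range 3).filter (· ≠ i))).map (fun k => neg (dia (α₀ k)))).foldr MFU.and MFU.top
def alpha (i : Nat) : Nat → MFU
  | 0 => α₀ i
  | (j+1) => and (dia (α₀ i)) (and (dia (alpha i j)) (and (neg (dia (dia (alpha i j)))) (others i)))
/-- ε(t,φ,ψ) = ◇α^0_t ∧ ¬◇α^0_{t+1} ∧ ◇φ ∧ ¬◇◇φ ∧ ◇ψ ∧ ¬◇◇ψ. -/
def eps (t : Nat) (φ ψ : MFU) : MFU :=
  and (dia (alpha 0 t)) (and (neg (dia (alpha 0 (t+1))))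
    (and (dia φ) (and (neg (dia (dia φ))) (and (dia ψ) (neg (dia (dia ψ)))))))
/-- π₁ (with p₁ = var 0). -/
def π₁ : MFU :=
  and (or (dia (α₀ 1)) (α₀ 1)) (and (neg (dia (α₀ 0))) (and (neg (dia (α₀ 2)))
    (and (var 0) (neg (dia (var 0))))))
/-- π₂ (with p₁ = var 0). -/
def π₂ : MFU :=
  and (dia (α₀ 1)) (and (neg (dia (α₀ 0))) (and (neg (dia (α₀ 2)))
    (and (dia (var 0)) (neg (dia (dia (var 0)))))))
/-- τ₁ (with p₂ = var 1). -/
def τ₁ : MFU :=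
  and (or (dia (α₀ 2)) (α₀ 2)) (and (neg (dia (α₀ 0))) (and (neg (dia (α₀ 1)))
    (and (var 1) (neg (dia (var 1))))))
/-- τ₂ (with p₂ = var 1). -/
def τ₂ : MFU :=
  and (dia (α₀ 2)) (and (neg (dia (α₀ 0))) (and (neg (dia (α₀ 1)))
    (and (dia (var 1)) (neg (dia (dia (var 1)))))))
end MFU
/-- Instructions of a Minsky (two-register) machine. -/
inductive Instr : Type where
  | inc1 (s t : Nat)            -- s → ⟨t,1,0⟩
  | inc2 (s t : Nat)            -- s → ⟨t,0,1⟩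
  | dec1 (s t t' : Nat)         -- s → ⟨t,-1,0⟩(⟨t',0,0⟩)
  | dec2 (s t t' : Nat)         -- s → ⟨t,0,-1⟩(⟨t',0,0⟩)
deriving DecidableEq

abbrev Config := Nat × Nat × Nat

def Instr.src : Instr → Nat
  | .inc1 s _ => s
  | .inc2 s _ => s
  | .dec1 s _ _ => s
  | .dec2 s _ _ => s

/-- One-step transformation of configurations by an instruction. -/
def Instr.Step : Instr → Config → Config → Prop
  | .inc1 s t, (s₁, m, n), c => s₁ = s ∧ c = (t, m+1, n)
  | .inc2 s t, (s₁, m, n), c => s₁ = s ∧ c = (t, m, n+1)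
  | .dec1 s t t', (s₁, m, n), c =>
      s₁ = s ∧ ((m ≠ 0 ∧ c = (t, m-1, n)) ∨ (m = 0 ∧ c = (t', 0, n)))
  | .dec2 s t t', (s₁, m, n), c =>
      s₁ = s ∧ ((n ≠ 0 ∧ c = (t, m, n-1)) ∨ (n = 0 ∧ c = (t', m, 0)))

/-- P : 𝔞 → 𝔟 : reachability in finitely many (possibly zero) steps. -/
def Reach (P : List Instr) : Config → Config → Prop :=
  Relation.ReflTransGen (fun c c' => ∃ I ∈ P, I.Step c c')

/-- At most one instruction with a given state on the left-hand side. -/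
def Deterministic (P : List Instr) : Prop :=
  ∀ I ∈ P, ∀ J ∈ P, I.src = J.src → I = J
/-- The points of the frame 𝔉 of Fig. 1. -/
inductive Pt : Type where
  | a | b | g | g1 | g2 | d | d1 | d2
  | chain (i j : Nat)          -- the point a^i_j
  | e (t k l : Nat)            -- the point e(t,k,l)
deriving DecidableEq

/-- Membership in the frame: e(t,k,l) exists only for reachable configurations. -/
def Pt.Ok (P : List Instr) (c₀ : Config) : Pt → Prop
  | .chain i _ => i ≤ 2
  | .e t k l => Reach P c₀ (t, k, l)
  | _ => True

/-- The base relation whose transitive closure is the accessibility relation of 𝔉. -/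
def Pt.R0 : Pt → Pt → Prop
  | .a, .a => True
  | .g, .a => True
  | .g, .b => True
  | .d, .b => True
  | .g1, .g => True
  | .g2, .g1 => True
  | .d1, .d => True
  | .d2, .d1 => True
  | .chain 0 0, .g => True
  | .chain 0 0, .d => True
  | .chain 1 0, .g1 => True
  | .chain 1 0, .d1 => True
  | .chain 2 0, .g2 => True
  | .chain 2 0, .d2 => True
  | .chain i (j+1), .chain i' j' => i = i' ∧ j = j'
  | .e t _ _, .chain 0 t' => t = t'
  | .e _ k _, .chain 1 k' => k = k'
  | .e _ _ l, .chain 2 l' => l = l'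
  | _, _ => False

/-- The carrier of the frame 𝔉 built from P and 𝔞 = c₀. -/
def FW (P : List Instr) (c₀ : Config) : Type := {p : Pt // Pt.Ok P c₀ p}

/-- The accessibility relation of 𝔉: the transitive closure of R0. -/
def FR (P : List Instr) (c₀ : Config) : FW P c₀ → FW P c₀ → Prop :=
  fun x y => Relation.TransGen Pt.R0 x.1 y.1
namespace Chagrov
open Pt

/-- The downward-closed "base" sets under the chains. -/
def base : Nat → Pt → Prop
  | 0, y => y = Pt.g ∨ y = Pt.d ∨ y = Pt.a ∨ y = Pt.b
  | 1, y => y = Pt.g1 ∨ y = Pt.d1 ∨ base 0 y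
  | 2, y => y = Pt.g2 ∨ y = Pt.d2 ∨ base 1 y
  | _, _ => False

/-- Explicit description of the transitive closure of R0. -/
def sees : Pt → Pt → Prop
  | .a, y => y = Pt.a
  | .b, _ => False
  | .g, y => y = Pt.a ∨ y = Pt.b
  | .d, y => y = Pt.b
  | .g1, y => y = Pt.g ∨ y = Pt.a ∨ y = Pt.b
  | .g2, y => y = Pt.g1 ∨ y = Pt.g ∨ y = Pt.a ∨ y = Pt.b
  | .d1, y => y = Pt.d ∨ y = Pt.b
  | .d2, y => y = Pt.d1 ∨ y = Pt.d ∨ y = Pt.b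
  | .chain i j, y => (∃ j' < j, y = Pt.chain i j') ∨ (i ≤ 2 ∧ base i y)
  | .e t k l, y => (∃ j ≤ t, y = Pt.chain 0 j) ∨ (∃ j ≤ k, y = Pt.chain 1 j) ∨
      (∃ j ≤ l, y = Pt.chain 2 j) ∨ base 2 y

lemma base_mono {i i' : Nat} {y : Pt} (h : i ≤ i') (hi : i' ≤ 2) (hy : base i y) : base i' y := by
  interval_cases i' <;> interval_cases i <;> simp_all [base]

lemma base_no_chain {i n m : Nat} (h : base i (Pt.chain n m)) : False := by
  rcases i with _|_|_|i <;> simp [base] at h <;> try exact h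

lemma base_no_e {i t k l : Nat} (h : base i (Pt.e t k l)) : False := by
  rcases i with _|_|_|i <;> simp [base] at h <;> try exact h

lemma base_closed {i : Nat} (hi : i ≤ 2) {y z : Pt} (hy : base i y) (hz : sees y z) :
    base i z := by
  interval_cases i <;> simp only [base] at hy ⊢
  · rcases hy with rfl|rfl|rfl|rfl <;> simp only [sees] at hz <;>
      first
        | exact hz.elim
        | (rcases hz with rfl|rfl|rfl|rfl <;> simp)
        | (rcases hz with rfl|rfl|rfl <;> simp)
        | (rcases hz with rfl|rfl <;> simp)
        | (subst hz; simp)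
  · rcases hy with rfl|rfl|rfl|rfl|rfl|rfl <;> simp only [sees] at hz <;>
      first
        | exact hz.elim
        | (rcases hz with rfl|rfl|rfl|rfl <;> simp)
        | (rcases hz with rfl|rfl|rfl <;> simp)
        | (rcases hz with rfl|rfl <;> simp)
        | (subst hz; simp)
  · rcases hy with rfl|rfl|rfl|rfl|rfl|rfl|rfl|rfl <;> simp only [sees] at hz <;>
      first
        | exact hz.elim
        | (rcases hz with rfl|rfl|rfl|rfl <;> simp)
        | (rcases hz with rfl|rfl|rfl <;> simp)
        | (rcases hz with rfl|rfl <;> simp)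
        | (subst hz; simp)

lemma sees_trans : ∀ {x y z : Pt}, sees x y → sees y z → sees x z := by
  intro x y z hxy hyz
  match x with
  | .a => simp only [sees] at hxy ⊢; subst hxy; exact hyz
  | .b => exact absurd hxy id
  | .g => simp only [sees] at hxy; rcases hxy with rfl|rfl
          · simp only [sees] at hyz ⊢; subst hyz; simp
          · exact hyz.elim
  | .d => simp only [sees] at hxy; subst hxy; exact hyz.elim
  | .g1 => simp only [sees] at hxy; rcases hxy with rfl|rfl|rfl
           · simp only [sees] at hyz ⊢; tauto
           · simp only [sees] at hyz ⊢; tauto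
           · exact hyz.elim
  | .g2 => simp only [sees] at hxy; rcases hxy with rfl|rfl|rfl|rfl <;>
             first
             | exact hyz.elim
             | (simp only [sees] at hyz ⊢; tauto)
  | .d1 => simp only [sees] at hxy; rcases hxy with rfl|rfl
           · simp only [sees] at hyz ⊢; tauto
           · exact hyz.elim
  | .d2 => simp only [sees] at hxy; rcases hxy with rfl|rfl|rfl <;>
             first
             | exact hyz.elim
             | (simp only [sees] at hyz ⊢; tauto)
  | .chain i j =>
      simp only [sees] at hxy ⊢
      rcases hxy with ⟨j', hj', rfl⟩ | ⟨hi, hb⟩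
      · simp only [sees] at hyz
        rcases hyz with ⟨j'', hj'', rfl⟩ | ⟨hi, hb⟩
        · exact Or.inl ⟨j'', lt_trans hj'' hj', rfl⟩
        · exact Or.inr ⟨hi, hb⟩
      · exact Or.inr ⟨hi, base_closed hi hb hyz⟩
  | .e t k l =>
      simp only [sees] at hxy ⊢
      rcases hxy with ⟨j, hj, rfl⟩ | ⟨j, hj, rfl⟩ | ⟨j, hj, rfl⟩ | hb
      · simp only [sees] at hyz
        rcases hyz with ⟨j', hj', rfl⟩ | ⟨_, hb⟩
        · exact Or.inl ⟨j', le_trans (le_of_lt hj') hj, rfl⟩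
        · exact Or.inr <| Or.inr <| Or.inr <| base_mono (by omega) (by omega) hb
      · simp only [sees] at hyz
        rcases hyz with ⟨j', hj', rfl⟩ | ⟨_, hb⟩
        · exact Or.inr <| Or.inl ⟨j', le_trans (le_of_lt hj') hj, rfl⟩
        · exact Or.inr <| Or.inr <| Or.inr <| base_mono (by omega) (by omega) hb
      · simp only [sees] at hyz
        rcases hyz with ⟨j', hj', rfl⟩ | ⟨_, hb⟩
        · exact Or.inr <| Or.inr <| Or.inl ⟨j', le_trans (le_of_lt hj') hj, rfl⟩
        · exact Or.inr <| Or.inr <| Or.inr <| hb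
      · exact Or.inr <| Or.inr <| Or.inr <| base_closed (by omega) hb hyz

lemma r0_sees {x y : Pt} (h : Pt.R0 x y) : sees x y := by
  cases x with
  | a => cases y <;> try exact h.elim
         · simp [sees]
  | b => cases y <;> exact h.elim
  | g => cases y <;> try exact h.elim
         · simp [sees]
         · simp [sees]
  | d => cases y <;> try exact h.elim
         · simp [sees]
  | g1 => cases y <;> try exact h.elim
          · simp [sees]
  | g2 => cases y <;> try exact h.elim
          · simp [sees]
  | d1 => cases y <;> try exact h.elim
          · simp [sees]
  | d2 => cases y <;> try exact h.elim
          · simp [sees]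
  | chain i j =>
      rcases j with _|j
      · rcases i with _|_|_|i <;> cases y <;> try exact h.elim
        all_goals exact Or.inr ⟨by omega, by simp [base]⟩
      · cases y <;> try (rcases i with _|_|_|i <;> exact h.elim)
        case chain i' j' =>
          have h' : i = i' ∧ j = j' := by rcases i with _|_|_|i <;> exact h
          obtain ⟨rfl, rfl⟩ := h'
          exact Or.inl ⟨j, by omega, rfl⟩
  | e t k l =>
      cases y with
      | chain i j =>
          rcases i with _|_|_|i <;> simp only [sees]
          · subst h; exact Or.inl ⟨_, le_refl _, rfl⟩
          · subst h; exact Or.inr <| Or.inl ⟨_, le_refl _, rfl⟩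
          · subst h; exact Or.inr <| Or.inr <| Or.inl ⟨_, le_refl _, rfl⟩
          · exact h.elim
      | _ => exact h.elim

lemma tc_of_sees : ∀ {x y : Pt}, sees x y → Relation.TransGen Pt.R0 x y := by
  have s : ∀ x y : Pt, Pt.R0 x y → Relation.TransGen Pt.R0 x y := fun _ _ h =>
    Relation.TransGen.single h
  have chain_step : ∀ i j, Relation.TransGen Pt.R0 (Pt.chain i (j+1)) (Pt.chain i j) :=
    fun i j => by rcases i with _|_|_|i <;> exact Relation.TransGen.single ⟨rfl, rfl⟩
  have chain_down : ∀ i j j', j' < j → Relation.TransGen Pt.R0 (Pt.chain i j) (Pt.chain i j') := by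
    intro i j
    induction j with
    | zero => omega
    | succ n ih =>
        intro j' hj'
        rcases Nat.lt_succ_iff_lt_or_eq.mp hj' with h | rfl
        · exact (chain_step i n).trans (ih j' h)
        · exact chain_step i j'
  have base_tc : ∀ i y, i ≤ 2 → base i y → Relation.TransGen Pt.R0 (Pt.chain i 0) y := by
    intro i y hi hb
    interval_cases i <;> simp only [base] at hb
    · rcases hb with rfl|rfl|rfl|rfl
      · exact s _ _ (by exact trivial)
      · exact s _ _ (by exact trivial)
      · exact (s _ Pt.g (by exact trivial)).trans (s _ _ (by exact trivial))
      · exact (s _ Pt.g (by exact trivial)).trans (s _ _ (by exact trivial))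
    · have hg : Relation.TransGen Pt.R0 (Pt.chain 1 0) Pt.g :=
        (s _ Pt.g1 (by exact trivial)).trans (s _ _ (by exact trivial))
      have hd : Relation.TransGen Pt.R0 (Pt.chain 1 0) Pt.d :=
        (s _ Pt.d1 (by exact trivial)).trans (s _ _ (by exact trivial))
      rcases hb with rfl|rfl|rfl|rfl|rfl|rfl
      · exact s _ _ (by exact trivial)
      · exact s _ _ (by exact trivial)
      · exact hg
      · exact hd
      · exact hg.trans (s _ _ (by exact trivial))
      · exact hg.trans (s _ _ (by exact trivial))
    · have hg1 : Relation.TransGen Pt.R0 (Pt.chain 2 0) Pt.g1 :=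
        (s _ Pt.g2 (by exact trivial)).trans (s _ _ (by exact trivial))
      have hd1 : Relation.TransGen Pt.R0 (Pt.chain 2 0) Pt.d1 :=
        (s _ Pt.d2 (by exact trivial)).trans (s _ _ (by exact trivial))
      have hg : Relation.TransGen Pt.R0 (Pt.chain 2 0) Pt.g := hg1.trans (s _ _ (by exact trivial))
      have hd : Relation.TransGen Pt.R0 (Pt.chain 2 0) Pt.d := hd1.trans (s _ _ (by exact trivial))
      rcases hb with rfl|rfl|rfl|rfl|rfl|rfl|rfl|rfl
      · exact s _ _ (by exact trivial)
      · exact s _ _ (by exact trivial)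
      · exact hg1
      · exact hd1
      · exact hg
      · exact hd
      · exact hg.trans (s _ _ (by exact trivial))
      · exact hg.trans (s _ _ (by exact trivial))
  have chain_base : ∀ i j y, i ≤ 2 → base i y →
      Relation.TransGen Pt.R0 (Pt.chain i j) y := by
    intro i j y hi hb
    match j with
    | 0 => exact base_tc i y hi hb
    | (n+1) => exact (chain_down i (n+1) 0 (by omega)).trans (base_tc i y hi hb)
  intro x y h
  match x with
  | .a => simp only [sees] at h; subst h; exact s _ _ (by exact trivial)
  | .b => exact absurd h id
  | .g => simp only [sees] at h; rcases h with rfl|rfl <;> exact s _ _ (by exact trivial)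
  | .d => simp only [sees] at h; subst h; exact s _ _ (by exact trivial)
  | .g1 =>
      simp only [sees] at h
      rcases h with rfl|rfl|rfl
      · exact s _ _ (by exact trivial)
      · exact (s _ Pt.g (by exact trivial)).trans (s _ _ (by exact trivial))
      · exact (s _ Pt.g (by exact trivial)).trans (s _ _ (by exact trivial))
  | .g2 =>
      have hg : Relation.TransGen Pt.R0 Pt.g2 Pt.g :=
        (s _ Pt.g1 (by exact trivial)).trans (s _ _ (by exact trivial))
      simp only [sees] at h
      rcases h with rfl|rfl|rfl|rfl
      · exact s _ _ (by exact trivial)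
      · exact hg
      · exact hg.trans (s _ _ (by exact trivial))
      · exact hg.trans (s _ _ (by exact trivial))
  | .d1 =>
      simp only [sees] at h
      rcases h with rfl|rfl
      · exact s _ _ (by exact trivial)
      · exact (s _ Pt.d (by exact trivial)).trans (s _ _ (by exact trivial))
  | .d2 =>
      simp only [sees] at h
      rcases h with rfl|rfl|rfl
      · exact s _ _ (by exact trivial)
      · exact (s _ Pt.d1 (by exact trivial)).trans (s _ _ (by exact trivial))
      · exact (s _ Pt.d1 (by exact trivial)).trans ((s _ Pt.d (by exact trivial)).trans (s _ _ (by exact trivial)))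
  | .chain i j =>
      simp only [sees] at h
      rcases h with ⟨j', hj', rfl⟩ | ⟨hi, hb⟩
      · exact chain_down i j j' hj'
      · exact chain_base i j _ hi hb
  | .e t k l =>
      simp only [sees] at h
      rcases h with ⟨j, hj, rfl⟩ | ⟨j, hj, rfl⟩ | ⟨j, hj, rfl⟩ | hb
      · rcases Nat.lt_or_ge j t with h | h
        · exact (s _ (Pt.chain 0 t) (by exact rfl)).trans (chain_down 0 t j h)
        · have : j = t := by omega
          subst this; exact s _ _ (by exact rfl)
      · rcases Nat.lt_or_ge j k with h | h
        · exact (s _ (Pt.chain 1 k) (by exact rfl)).trans (chain_down 1 k j h)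
        · have : j = k := by omega
          subst this; exact s _ _ (by exact rfl)
      · rcases Nat.lt_or_ge j l with h | h
        · exact (s _ (Pt.chain 2 l) (by exact rfl)).trans (chain_down 2 l j h)
        · have : j = l := by omega
          subst this; exact s _ _ (by exact rfl)
      · exact (s _ (Pt.chain 2 l) (by exact rfl)).trans (chain_base 2 l _ (by omega) hb)

lemma tc_iff_sees {x y : Pt} : Relation.TransGen Pt.R0 x y ↔ sees x y := by
  constructor
  · intro h
    induction h with
    | single h => exact r0_sees h
    | tail _ h ih => exact sees_trans ih (r0_sees h)
  · exact tc_of_sees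

end Chagrov
namespace Chagrov

/-- Ok is closed under sees. -/
lemma ok_sees {P : List Instr} {c₀ : Config} : ∀ {p q : Pt},
    Pt.Ok P c₀ p → sees p q → Pt.Ok P c₀ q := by
  have atomOk : ∀ q : Pt, (∀ n m, q ≠ Pt.chain n m) → (∀ t k l, q ≠ Pt.e t k l) →
      Pt.Ok P c₀ q := by
    intro q h1 h2
    cases q <;> first | trivial | (exact absurd rfl (h1 _ _)) | (exact absurd rfl (h2 _ _ _))
  have baseOk : ∀ {i q}, base i q → Pt.Ok P c₀ q := by
    intro i q hb
    refine atomOk q (fun n m h => ?_) (fun t k l h => ?_)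
    · subst h; exact base_no_chain hb
    · subst h; exact base_no_e hb
  intro p q hp hq
  match p with
  | .a => simp only [sees] at hq; subst hq; trivial
  | .b => exact hq.elim
  | .g => simp only [sees] at hq; rcases hq with rfl|rfl <;> trivial
  | .d => simp only [sees] at hq; subst hq; trivial
  | .g1 => simp only [sees] at hq; rcases hq with rfl|rfl|rfl <;> trivial
  | .g2 => simp only [sees] at hq; rcases hq with rfl|rfl|rfl|rfl <;> trivial
  | .d1 => simp only [sees] at hq; rcases hq with rfl|rfl <;> trivial
  | .d2 => simp only [sees] at hq; rcases hq with rfl|rfl|rfl <;> trivial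
  | .chain i j =>
      simp only [sees] at hq
      rcases hq with ⟨j', _, rfl⟩ | ⟨hi, hb⟩
      · exact hp
      · exact baseOk hb
  | .e t k l =>
      simp only [sees] at hq
      rcases hq with ⟨j, _, rfl⟩ | ⟨j, _, rfl⟩ | ⟨j, _, rfl⟩ | hb
      · show (0:Nat) ≤ 2; omega
      · show (1:Nat) ≤ 2; omega
      · show (2:Nat) ≤ 2; omega
      · exact baseOk hb

/-- Formulas without variables and without the universal modality. -/
def closedF : MFU → Prop
  | .var _ => False
  | .bot => True
  | .neg φ => closedF φ
  | .and φ ψ => closedF φ ∧ closedF ψ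
  | .box φ => closedF φ
  | .ubox _ => False

/-- Pt-level satisfaction (for closed formulas). -/
def psat : Pt → MFU → Prop
  | _, .var _ => False
  | _, .bot => False
  | p, .neg φ => ¬ psat p φ
  | p, .and φ ψ => psat p φ ∧ psat p ψ
  | p, .box φ => ∀ q, sees p q → psat q φ
  | _, .ubox _ => False

lemma psat_and {p : Pt} {φ ψ : MFU} : psat p (MFU.and φ ψ) ↔ psat p φ ∧ psat p ψ := Iff.rfl
lemma psat_neg {p : Pt} {φ : MFU} : psat p (MFU.neg φ) ↔ ¬ psat p φ := Iff.rfl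

lemma psat_dia {p : Pt} {φ : MFU} : psat p (MFU.dia φ) ↔ ∃ q, sees p q ∧ psat q φ := by
  simp only [MFU.dia, psat]; push_neg; tauto

lemma satU_dia {W : Type} {R : W → W → Prop} {V : Nat → W → Prop} {x : W} {φ : MFU} :
    satU R V x (MFU.dia φ) ↔ ∃ y, R x y ∧ satU R V y φ := by
  simp only [MFU.dia, satU]; push_neg; tauto

lemma satU_uEx {W : Type} {R : W → W → Prop} {V : Nat → W → Prop} {x : W} {φ : MFU} :
    satU R V x (MFU.uEx φ) ↔ ∃ y, satU R V y φ := by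
  simp only [MFU.uEx, satU]; push_neg; tauto

lemma satU_imp {W : Type} {R : W → W → Prop} {V : Nat → W → Prop} {x : W} {φ ψ : MFU} :
    satU R V x (MFU.imp φ ψ) ↔ (satU R V x φ → satU R V x ψ) := by
  simp only [MFU.imp, MFU.or, satU]; tauto

/-- Transfer between model satisfaction and Pt-level satisfaction for closed formulas. -/
lemma sat_eq_psat {P : List Instr} {c₀ : Config} {V : Nat → FW P c₀ → Prop} :
    ∀ (φ : MFU), closedF φ → ∀ (x : FW P c₀), satU (FR P c₀) V x φ ↔ psat x.1 φ := by
  intro φ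
  induction φ with
  | var n => intro h; exact h.elim
  | bot => intro _ x; exact Iff.rfl
  | neg φ ih => intro h x; exact not_congr (ih h x)
  | and φ ψ ihφ ihψ => intro h x; exact and_congr (ihφ h.1 x) (ihψ h.2 x)
  | box φ ih =>
      intro h x
      constructor
      · intro hb q hq
        exact (ih h ⟨q, ok_sees x.2 hq⟩).mp (hb ⟨q, ok_sees x.2 hq⟩ (tc_of_sees hq))
      · intro hb y hy
        exact (ih h y).mpr (hb y.1 (tc_iff_sees.mp hy))
  | ubox φ ih => intro h; exact h.elim

lemma closedF_dia {φ : MFU} (h : closedF φ) : closedF (MFU.dia φ) := h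
lemma closedF_and {φ ψ : MFU} (h : closedF φ) (h' : closedF ψ) : closedF (MFU.and φ ψ) := ⟨h, h'⟩

end Chagrov
namespace Chagrov
open Pt MFU

/-- Chain-index sanity (true at all points of the real frame). -/
def okc : Pt → Prop
  | .chain i _ => i ≤ 2
  | _ => True

lemma okc_sees : ∀ {p q : Pt}, okc p → sees p q → okc q := by
  have baseOkc : ∀ {i q}, base i q → okc q := by
    intro i q hb
    cases q <;> first
      | trivial
      | (exact absurd hb base_no_chain)
      | (exact absurd hb base_no_e)
  intro p q hp hq
  match p with
  | .a => simp only [sees] at hq; subst hq; trivial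
  | .b => exact hq.elim
  | .g => simp only [sees] at hq; rcases hq with rfl|rfl <;> trivial
  | .d => simp only [sees] at hq; subst hq; trivial
  | .g1 => simp only [sees] at hq; rcases hq with rfl|rfl|rfl <;> trivial
  | .g2 => simp only [sees] at hq; rcases hq with rfl|rfl|rfl|rfl <;> trivial
  | .d1 => simp only [sees] at hq; rcases hq with rfl|rfl <;> trivial
  | .d2 => simp only [sees] at hq; rcases hq with rfl|rfl|rfl <;> trivial
  | .chain i j =>
      simp only [sees] at hq
      rcases hq with ⟨j', _, rfl⟩ | ⟨hi, hb⟩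
      · exact hp
      · exact baseOkc hb
  | .e t k l =>
      simp only [sees] at hq
      rcases hq with ⟨j, _, rfl⟩ | ⟨j, _, rfl⟩ | ⟨j, _, rfl⟩ | hb
      · show (0:Nat) ≤ 2; omega
      · show (1:Nat) ≤ 2; omega
      · show (2:Nat) ≤ 2; omega
      · exact baseOkc hb

lemma ok_okc {P : List Instr} {c₀ : Config} {p : Pt} (h : Pt.Ok P c₀ p) : okc p := by
  cases p <;> first | trivial | exact h

lemma pdia_char {φ : MFU} {S : Pt → Prop}
    (hchar : ∀ q, okc q → (psat q φ ↔ S q)) {p : Pt} (hp : okc p) :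
    psat p (MFU.dia φ) ↔ ∃ q, sees p q ∧ S q := by
  rw [psat_dia]
  constructor
  · rintro ⟨q, h1, h2⟩; exact ⟨q, h1, (hchar q (okc_sees hp h1)).mp h2⟩
  · rintro ⟨q, h1, h2⟩; exact ⟨q, h1, (hchar q (okc_sees hp h1)).mpr h2⟩

lemma pdia2_char {φ : MFU} {S : Pt → Prop}
    (hchar : ∀ q, okc q → (psat q φ ↔ S q)) {p : Pt} (hp : okc p) :
    psat p (MFU.dia (MFU.dia φ)) ↔ ∃ q r, sees p q ∧ sees q r ∧ S r := by
  rw [pdia_char (fun q hq => pdia_char hchar hq) hp]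
  constructor
  · rintro ⟨q, h1, r, h2, h3⟩; exact ⟨q, r, h1, h2, h3⟩
  · rintro ⟨q, r, h1, h2, h3⟩; exact ⟨q, h1, r, h2, h3⟩

lemma base_b {i : Nat} (h : i ≤ 2) : base i Pt.b := by interval_cases i <;> simp [base]
lemma base_g {i : Nat} (h : i ≤ 2) : base i Pt.g := by interval_cases i <;> simp [base]
lemma base_d {i : Nat} (h : i ≤ 2) : base i Pt.d := by interval_cases i <;> simp [base]
lemma base_a {i : Nat} (h : i ≤ 2) : base i Pt.a := by interval_cases i <;> simp [base]

/-- Atoms in `base` never see chain points. -/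
lemma base_sees_no_chain {i : Nat} (hi : i ≤ 2) {q : Pt} (hb : base i q) {n m : Nat}
    (h : sees q (Pt.chain n m)) : False :=
  base_no_chain (base_closed hi hb h)

lemma psat_fα (p : Pt) : psat p MFU.fα ↔ p = Pt.a := by
  have h : psat p MFU.fα ↔ ((∃ q, sees p q) ∧ ∀ q, sees p q → ∃ r, sees q r) := by
    simp [MFU.fα, MFU.top, psat, psat_dia]
  rw [h]
  constructor
  · rintro ⟨⟨q, hq⟩, h2⟩
    cases p
    case a => rfl
    case b => exact hq.elim
    case g => obtain ⟨r, hr⟩ := h2 Pt.b (by simp [sees]); exact hr.elim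
    case d => obtain ⟨r, hr⟩ := h2 Pt.b (by simp [sees]); exact hr.elim
    case g1 => obtain ⟨r, hr⟩ := h2 Pt.b (by simp [sees]); exact hr.elim
    case g2 => obtain ⟨r, hr⟩ := h2 Pt.b (by simp [sees]); exact hr.elim
    case d1 => obtain ⟨r, hr⟩ := h2 Pt.b (by simp [sees]); exact hr.elim
    case d2 => obtain ⟨r, hr⟩ := h2 Pt.b (by simp [sees]); exact hr.elim
    case e t k l => obtain ⟨r, hr⟩ := h2 Pt.b (Or.inr <| Or.inr <| Or.inr (base_b (by omega)))
                    exact hr.elim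
    case chain i j =>
      by_cases hi : i ≤ 2
      · obtain ⟨r, hr⟩ := h2 Pt.b (Or.inr ⟨hi, base_b hi⟩)
        exact hr.elim
      · simp only [sees] at hq
        rcases hq with ⟨j', hj', rfl⟩ | ⟨hi2, _⟩
        · obtain ⟨r, hr⟩ := h2 (Pt.chain i 0) (Or.inl ⟨0, by omega, rfl⟩)
          simp only [sees] at hr
          rcases hr with ⟨j'', hj'', _⟩ | ⟨hi2, _⟩
          · exact absurd hj'' (by omega)
          · exact absurd hi2 hi
        · exact absurd hi2 hi
  · rintro rfl
    refine ⟨⟨Pt.a, show Pt.a = Pt.a from rfl⟩, fun q hq => ?_⟩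
    have hq' : q = Pt.a := hq
    subst hq'
    exact ⟨Pt.a, show Pt.a = Pt.a from rfl⟩

lemma psat_fβ (p : Pt) (hp : okc p) : psat p MFU.fβ ↔ p = Pt.b := by
  have h : psat p MFU.fβ ↔ ∀ q, ¬ sees p q := by
    simp only [MFU.fβ, psat]
    try tauto
  rw [h]
  constructor
  · intro h2
    cases p
    case b => rfl
    case a => exact absurd (by simp [sees] : sees Pt.a Pt.a) (h2 _)
    case g => exact absurd (by simp [sees] : sees Pt.g Pt.b) (h2 _)
    case d => exact absurd (by simp [sees] : sees Pt.d Pt.b) (h2 _)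
    case g1 => exact absurd (by simp [sees] : sees Pt.g1 Pt.b) (h2 _)
    case g2 => exact absurd (by simp [sees] : sees Pt.g2 Pt.b) (h2 _)
    case d1 => exact absurd (by simp [sees] : sees Pt.d1 Pt.b) (h2 _)
    case d2 => exact absurd (by simp [sees] : sees Pt.d2 Pt.b) (h2 _)
    case chain i j => exact absurd (Or.inr ⟨hp, base_b hp⟩ : sees (Pt.chain i j) Pt.b) (h2 _)
    case e t k l =>
      exact absurd (Or.inr <| Or.inr <| Or.inr (base_b (by omega)) : sees (Pt.e t k l) Pt.b) (h2 _)
  · rintro rfl q hq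
    exact hq.elim

lemma psat_fγ (p : Pt) (hp : okc p) : psat p MFU.fγ ↔ p = Pt.g := by
  have h : psat p MFU.fγ ↔ (∃ q, sees p q ∧ q = Pt.a) ∧ (∃ q, sees p q ∧ q = Pt.b) ∧
      ¬ ∃ q r, sees p q ∧ sees q r ∧ r = Pt.b := by
    simp only [MFU.fγ, psat_and, psat_neg]
    rw [pdia_char (fun q _ => psat_fα q) hp, pdia_char psat_fβ hp, pdia2_char psat_fβ hp]
  rw [h]
  simp only [exists_eq_right, exists_eq_right_right]
  constructor
  · rintro ⟨h1, h2, h3⟩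
    cases p
    case g => rfl
    case a => simp [sees] at h2
    case b => exact h1.elim
    case d => simp [sees] at h1
    case d1 => simp [sees] at h1
    case d2 => simp [sees] at h1
    case g1 => exact absurd ⟨Pt.g, by simp [sees], by simp [sees]⟩ h3
    case g2 => exact absurd ⟨Pt.g, by simp [sees], by simp [sees]⟩ h3
    case chain i j =>
      exact absurd ⟨Pt.g, Or.inr ⟨hp, base_g hp⟩, by simp [sees]⟩ h3
    case e t k l =>
      exact absurd ⟨Pt.g, Or.inr <| Or.inr <| Or.inr (base_g (by omega)), by simp [sees]⟩ h3
  · rintro rfl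
    refine ⟨by simp [sees], by simp [sees], ?_⟩
    rintro ⟨q, hq, hr⟩
    simp only [sees] at hq
    rcases hq with rfl|rfl
    · simp [sees] at hr
    · exact hr.elim

lemma psat_fδ (p : Pt) (hp : okc p) : psat p MFU.fδ ↔ p = Pt.d := by
  have h : psat p MFU.fδ ↔ ¬ (p = Pt.g) ∧ (∃ q, sees p q ∧ q = Pt.b) ∧
      ¬ ∃ q r, sees p q ∧ sees q r ∧ r = Pt.b := by
    simp only [MFU.fδ, psat_and, psat_neg]
    rw [psat_fγ p hp, pdia_char psat_fβ hp, pdia2_char psat_fβ hp]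
  rw [h]
  simp only [exists_eq_right, exists_eq_right_right]
  constructor
  · rintro ⟨h0, h1, h3⟩
    cases p
    case d => rfl
    case g => exact absurd rfl h0
    case a => simp [sees] at h1
    case b => exact h1.elim
    case g1 => exact absurd ⟨Pt.g, by simp [sees], by simp [sees]⟩ h3
    case g2 => exact absurd ⟨Pt.g, by simp [sees], by simp [sees]⟩ h3
    case d1 => exact absurd ⟨Pt.d, by simp [sees], by simp [sees]⟩ h3
    case d2 => exact absurd ⟨Pt.d, by simp [sees], by simp [sees]⟩ h3
    case chain i j =>
      exact absurd ⟨Pt.g, Or.inr ⟨hp, base_g hp⟩, by simp [sees]⟩ h3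
    case e t k l =>
      exact absurd ⟨Pt.g, Or.inr <| Or.inr <| Or.inr (base_g (by omega)), by simp [sees]⟩ h3
  · rintro rfl
    refine ⟨by simp, by simp [sees], ?_⟩
    rintro ⟨q, hq, hr⟩
    simp only [sees] at hq; subst hq
    exact hr.elim

end Chagrov
namespace Chagrov
open Pt MFU

/-- The set of points where fδ₁ holds. -/
def S1 (q : Pt) : Prop := q = Pt.d1 ∨ q = Pt.chain 0 0
/-- The set of points where fδ₂ holds. -/
def S2 (q : Pt) : Prop := q = Pt.d2 ∨ q = Pt.chain 1 0 ∨ q = Pt.chain 0 1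

lemma psat_fγ₁ (p : Pt) (hp : okc p) : psat p MFU.fγ₁ ↔ p = Pt.g1 := by
  have h : psat p MFU.fγ₁ ↔ (∃ q, sees p q ∧ q = Pt.g) ∧
      (¬ ∃ q r, sees p q ∧ sees q r ∧ r = Pt.g) ∧ ¬ ∃ q, sees p q ∧ q = Pt.d := by
    simp only [MFU.fγ₁, psat_and, psat_neg]
    rw [pdia_char psat_fγ hp, pdia2_char psat_fγ hp, pdia_char psat_fδ hp]
  rw [h]
  simp only [exists_eq_right, exists_eq_right_right]
  constructor
  · rintro ⟨h1, h2, h3⟩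
    cases p
    case g1 => rfl
    case a => simp [sees] at h1
    case b => exact h1.elim
    case g => simp [sees] at h1
    case d => simp [sees] at h1
    case d1 => simp [sees] at h1
    case d2 => simp [sees] at h1
    case g2 => exact absurd ⟨Pt.g1, by simp [sees], by simp [sees]⟩ h2
    case chain i j => exact (h3 (Or.inr ⟨hp, base_d hp⟩)).elim
    case e t k l => exact (h3 (Or.inr <| Or.inr <| Or.inr (base_d (by omega)))).elim
  · rintro rfl
    refine ⟨by simp [sees], ?_, by simp [sees]⟩
    rintro ⟨q, hq, hr⟩
    simp only [sees] at hq
    rcases hq with rfl|rfl|rfl <;> simp [sees] at hr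

lemma psat_fγ₂ (p : Pt) (hp : okc p) : psat p MFU.fγ₂ ↔ p = Pt.g2 := by
  have h : psat p MFU.fγ₂ ↔ (∃ q, sees p q ∧ q = Pt.g1) ∧
      (¬ ∃ q r, sees p q ∧ sees q r ∧ r = Pt.g1) ∧ ¬ ∃ q, sees p q ∧ q = Pt.d := by
    simp only [MFU.fγ₂, psat_and, psat_neg]
    rw [pdia_char psat_fγ₁ hp, pdia2_char psat_fγ₁ hp, pdia_char psat_fδ hp]
  rw [h]
  simp only [exists_eq_right, exists_eq_right_right]
  constructor
  · rintro ⟨h1, h2, h3⟩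
    cases p
    case g2 => rfl
    case a => simp [sees] at h1
    case b => exact h1.elim
    case g => simp [sees] at h1
    case d => simp [sees] at h1
    case g1 => simp [sees] at h1
    case d1 => simp [sees] at h1
    case d2 => simp [sees] at h1
    case chain i j => exact (h3 (Or.inr ⟨hp, base_d hp⟩)).elim
    case e t k l => exact (h3 (Or.inr <| Or.inr <| Or.inr (base_d (by omega)))).elim
  · rintro rfl
    refine ⟨by simp [sees], ?_, by simp [sees]⟩
    rintro ⟨q, hq, hr⟩
    simp only [sees] at hq
    rcases hq with rfl|rfl|rfl|rfl <;> simp [sees] at hr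

lemma psat_fδ₁ (p : Pt) (hp : okc p) : psat p MFU.fδ₁ ↔ S1 p := by
  have h : psat p MFU.fδ₁ ↔ (∃ q, sees p q ∧ q = Pt.d) ∧
      (¬ ∃ q r, sees p q ∧ sees q r ∧ r = Pt.d) := by
    simp only [MFU.fδ₁, psat_and, psat_neg]
    rw [pdia_char psat_fδ hp, pdia2_char psat_fδ hp]
  rw [h]
  simp only [exists_eq_right, exists_eq_right_right, S1]
  constructor
  · rintro ⟨h1, h2⟩
    cases p
    case d1 => exact Or.inl rfl
    case a => simp [sees] at h1
    case b => exact h1.elim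
    case g => simp [sees] at h1
    case d => simp [sees] at h1
    case g1 => simp [sees] at h1
    case g2 => simp [sees] at h1
    case d2 => exact absurd ⟨Pt.d1, by simp [sees], by simp [sees]⟩ h2
    case e t k l =>
      exact (h2 ⟨Pt.d1, Or.inr <| Or.inr <| Or.inr (by simp [base]), by simp [sees]⟩).elim
    case chain i j =>
      have hi : i ≤ 2 := hp
      interval_cases i
      · rcases Nat.eq_zero_or_pos j with rfl | hj
        · exact Or.inr rfl
        · exact (h2 ⟨Pt.chain 0 0, Or.inl ⟨0, by omega, rfl⟩,
            Or.inr ⟨by omega, by simp [base]⟩⟩).elim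
      · exact (h2 ⟨Pt.d1, Or.inr ⟨by omega, by simp [base]⟩, by simp [sees]⟩).elim
      · exact (h2 ⟨Pt.d1, Or.inr ⟨by omega, by simp [base]⟩, by simp [sees]⟩).elim
  · rintro (rfl | rfl)
    · refine ⟨by simp [sees], ?_⟩
      rintro ⟨q, hq, hr⟩
      simp only [sees] at hq
      rcases hq with rfl|rfl <;> simp [sees] at hr
    · refine ⟨Or.inr ⟨by omega, by simp [base]⟩, ?_⟩
      rintro ⟨q, hq, hr⟩
      rcases hq with ⟨j', hj', rfl⟩ | ⟨_, hb⟩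
      · omega
      · simp only [base] at hb
        rcases hb with rfl|rfl|rfl|rfl <;> simp [sees] at hr

end Chagrov
namespace Chagrov
open Pt MFU

lemma psat_fδ₂ (p : Pt) (hp : okc p) : psat p MFU.fδ₂ ↔ S2 p := by
  have h : psat p MFU.fδ₂ ↔ (∃ q, sees p q ∧ S1 q) ∧
      (¬ ∃ q r, sees p q ∧ sees q r ∧ S1 r) := by
    simp only [MFU.fδ₂, psat_and, psat_neg]
    rw [pdia_char psat_fδ₁ hp, pdia2_char psat_fδ₁ hp]
  rw [h]
  constructor
  · rintro ⟨⟨q0, hq0, hS0⟩, h2⟩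
    cases p
    case d2 => exact Or.inl rfl
    case a => simp only [sees] at hq0; subst hq0; simp [S1] at hS0
    case b => exact hq0.elim
    case g => simp only [sees] at hq0; rcases hq0 with rfl|rfl <;> simp [S1] at hS0
    case d => simp only [sees] at hq0; subst hq0; simp [S1] at hS0
    case g1 => simp only [sees] at hq0; rcases hq0 with rfl|rfl|rfl <;> simp [S1] at hS0
    case g2 => simp only [sees] at hq0; rcases hq0 with rfl|rfl|rfl|rfl <;> simp [S1] at hS0
    case d1 => simp only [sees] at hq0; rcases hq0 with rfl|rfl <;> simp [S1] at hS0
    case e t k l =>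
      exact (h2 ⟨Pt.chain 1 0, Pt.d1, Or.inr <| Or.inl ⟨0, by omega, rfl⟩,
        Or.inr ⟨by omega, by simp [base]⟩, Or.inl rfl⟩).elim
    case chain i j =>
      have hi : i ≤ 2 := hp
      interval_cases i
      · rcases Nat.lt_or_ge j 2 with hj | hj
        · rcases Nat.lt_or_ge j 1 with hj1 | hj1
          · -- j = 0 : no S1 point visible
            exfalso
            have : j = 0 := by omega
            subst this
            rcases hq0 with ⟨j', hj', rfl⟩ | ⟨_, hb⟩
            · omega
            · simp only [base] at hb
              rcases hb with rfl|rfl|rfl|rfl <;> simp [S1] at hS0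
          · have : j = 1 := by omega
            subst this
            exact Or.inr (Or.inr rfl)
        · exact (h2 ⟨Pt.chain 0 1, Pt.chain 0 0, Or.inl ⟨1, by omega, rfl⟩,
            Or.inl ⟨0, by omega, rfl⟩, Or.inr rfl⟩).elim
      · rcases Nat.eq_zero_or_pos j with rfl | hj
        · exact Or.inr (Or.inl rfl)
        · exact (h2 ⟨Pt.chain 1 0, Pt.d1, Or.inl ⟨0, by omega, rfl⟩,
            Or.inr ⟨by omega, by simp [base]⟩, Or.inl rfl⟩).elim
      · exact (h2 ⟨Pt.d2, Pt.d1, Or.inr ⟨by omega, by simp [base]⟩,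
          by simp [sees], Or.inl rfl⟩).elim
  · rintro (rfl | rfl | rfl)
    · refine ⟨⟨Pt.d1, by simp [sees], Or.inl rfl⟩, ?_⟩
      rintro ⟨q, r, hq, hr, hS⟩
      simp only [sees] at hq
      rcases hq with rfl|rfl|rfl <;> simp only [sees] at hr <;>
        first
          | exact hr
          | (rcases hr with rfl|rfl <;> simp [S1] at hS)
          | (subst hr; simp [S1] at hS)
    · refine ⟨⟨Pt.d1, Or.inr ⟨by omega, by simp [base]⟩, Or.inl rfl⟩, ?_⟩
      rintro ⟨q, r, hq, hr, hS⟩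
      rcases hq with ⟨j', hj', rfl⟩ | ⟨_, hb⟩
      · omega
      · simp only [base] at hb
        rcases hb with rfl|rfl|rfl|rfl|rfl|rfl <;> simp only [sees] at hr <;>
          first
            | exact hr
            | (rcases hr with rfl|rfl|rfl <;> simp [S1] at hS)
            | (rcases hr with rfl|rfl <;> simp [S1] at hS)
            | (subst hr; simp [S1] at hS)
    · refine ⟨⟨Pt.chain 0 0, Or.inl ⟨0, by omega, rfl⟩, Or.inr rfl⟩, ?_⟩
      rintro ⟨q, r, hq, hr, hS⟩
      rcases hq with ⟨j', hj', rfl⟩ | ⟨_, hb⟩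
      · have : j' = 0 := by omega
        subst this
        rcases hr with ⟨j'', hj'', rfl⟩ | ⟨_, hb⟩
        · omega
        · simp only [base] at hb
          rcases hb with rfl|rfl|rfl|rfl <;> simp [S1] at hS
      · simp only [base] at hb
        rcases hb with rfl|rfl|rfl|rfl <;> simp only [sees] at hr <;>
          first
            | exact hr
            | (rcases hr with rfl|rfl <;> simp [S1] at hS)
            | (subst hr; simp [S1] at hS)

lemma psat_α₀0 (p : Pt) (hp : okc p) : psat p (MFU.α₀ 0) ↔ p = Pt.chain 0 0 := by
  have h : psat p (MFU.α₀ 0) ↔ (∃ q, sees p q ∧ q = Pt.g) ∧ (∃ q, sees p q ∧ q = Pt.d) ∧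
      (¬ ∃ q r, sees p q ∧ sees q r ∧ r = Pt.g) ∧
      (¬ ∃ q r, sees p q ∧ sees q r ∧ r = Pt.d) := by
    simp only [MFU.α₀, psat_and, psat_neg]
    rw [pdia_char psat_fγ hp, pdia_char psat_fδ hp, pdia2_char psat_fγ hp, pdia2_char psat_fδ hp]
  rw [h]
  simp only [exists_eq_right, exists_eq_right_right]
  constructor
  · rintro ⟨h1, h2, h3, h4⟩
    cases p
    case a => simp [sees] at h1
    case b => exact h1.elim
    case g => simp [sees] at h1
    case d => simp [sees] at h1
    case g1 => simp [sees] at h2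
    case g2 => simp [sees] at h2
    case d1 => simp [sees] at h1
    case d2 => simp [sees] at h1
    case e t k l =>
      exact (h3 ⟨Pt.g1, Or.inr <| Or.inr <| Or.inr (by simp [base]), by simp [sees]⟩).elim
    case chain i j =>
      have hi : i ≤ 2 := hp
      interval_cases i
      · rcases Nat.eq_zero_or_pos j with rfl | hj
        · rfl
        · exact (h3 ⟨Pt.chain 0 0, Or.inl ⟨0, by omega, rfl⟩,
            Or.inr ⟨by omega, by simp [base]⟩⟩).elim
      · exact (h3 ⟨Pt.g1, Or.inr ⟨by omega, by simp [base]⟩, by simp [sees]⟩).elim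
      · exact (h3 ⟨Pt.g1, Or.inr ⟨by omega, by simp [base]⟩, by simp [sees]⟩).elim
  · rintro rfl
    refine ⟨Or.inr ⟨by omega, by simp [base]⟩, Or.inr ⟨by omega, by simp [base]⟩, ?_, ?_⟩ <;>
    · rintro ⟨q, hq, hr⟩
      rcases hq with ⟨j', hj', rfl⟩ | ⟨_, hb⟩
      · omega
      · simp only [base] at hb
        rcases hb with rfl|rfl|rfl|rfl <;> simp [sees] at hr

lemma psat_α₀1 (p : Pt) (hp : okc p) : psat p (MFU.α₀ 1) ↔ p = Pt.chain 1 0 := by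
  have h : psat p (MFU.α₀ 1) ↔ (∃ q, sees p q ∧ q = Pt.g1) ∧ (∃ q, sees p q ∧ S1 q) ∧
      (¬ ∃ q r, sees p q ∧ sees q r ∧ r = Pt.g1) ∧
      (¬ ∃ q r, sees p q ∧ sees q r ∧ S1 r) := by
    simp only [MFU.α₀, psat_and, psat_neg]
    rw [pdia_char psat_fγ₁ hp, pdia_char psat_fδ₁ hp, pdia2_char psat_fγ₁ hp,
      pdia2_char psat_fδ₁ hp]
  rw [h]
  simp only [exists_eq_right, exists_eq_right_right]
  constructor
  · rintro ⟨h1, h2, h3, h4⟩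
    cases p
    case a => simp [sees] at h1
    case b => exact h1.elim
    case g => simp [sees] at h1
    case d => simp [sees] at h1
    case g1 => simp [sees] at h1
    case d1 => simp [sees] at h1
    case d2 => simp [sees] at h1
    case g2 =>
      obtain ⟨q, hq, hS⟩ := h2
      simp only [sees] at hq
      rcases hq with rfl|rfl|rfl|rfl <;> simp [S1] at hS
    case e t k l =>
      exact (h3 ⟨Pt.chain 1 0, Or.inr <| Or.inl ⟨0, by omega, rfl⟩,
        Or.inr ⟨by omega, by simp [base]⟩⟩).elim
    case chain i j =>
      have hi : i ≤ 2 := hp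
      interval_cases i
      · simp only [sees] at h1
        rcases h1 with ⟨j', _, h⟩ | ⟨_, hb⟩
        · exact absurd h (by simp)
        · exact absurd hb (by simp [base])
      · rcases Nat.eq_zero_or_pos j with rfl | hj
        · rfl
        · exact (h3 ⟨Pt.chain 1 0, Or.inl ⟨0, by omega, rfl⟩,
            Or.inr ⟨by omega, by simp [base]⟩⟩).elim
      · exact (h3 ⟨Pt.g2, Or.inr ⟨by omega, by simp [base]⟩, by simp [sees]⟩).elim
  · rintro rfl
    refine ⟨Or.inr ⟨by omega, by simp [base]⟩,
      ⟨Pt.d1, Or.inr ⟨by omega, by simp [base]⟩, Or.inl rfl⟩, ?_, ?_⟩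
    · rintro ⟨q, hq, hr⟩
      rcases hq with ⟨j', hj', rfl⟩ | ⟨_, hb⟩
      · omega
      · simp only [base] at hb
        rcases hb with rfl|rfl|rfl|rfl|rfl|rfl <;> simp [sees] at hr
    · rintro ⟨q, r, hq, hr, hS⟩
      rcases hq with ⟨j', hj', rfl⟩ | ⟨_, hb⟩
      · omega
      · simp only [base] at hb
        rcases hb with rfl|rfl|rfl|rfl|rfl|rfl <;> simp only [sees] at hr <;>
          first
            | exact hr
            | (rcases hr with rfl|rfl|rfl <;> simp [S1] at hS)
            | (rcases hr with rfl|rfl <;> simp [S1] at hS)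
            | (subst hr; simp [S1] at hS)

lemma psat_α₀2 (p : Pt) (hp : okc p) : psat p (MFU.α₀ 2) ↔ p = Pt.chain 2 0 := by
  have h : psat p (MFU.α₀ 2) ↔ (∃ q, sees p q ∧ q = Pt.g2) ∧ (∃ q, sees p q ∧ S2 q) ∧
      (¬ ∃ q r, sees p q ∧ sees q r ∧ r = Pt.g2) ∧
      (¬ ∃ q r, sees p q ∧ sees q r ∧ S2 r) := by
    simp only [MFU.α₀, psat_and, psat_neg]
    rw [pdia_char psat_fγ₂ hp, pdia_char psat_fδ₂ hp, pdia2_char psat_fγ₂ hp,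
      pdia2_char psat_fδ₂ hp]
  rw [h]
  simp only [exists_eq_right, exists_eq_right_right]
  constructor
  · rintro ⟨h1, h2, h3, h4⟩
    cases p
    case a => simp [sees] at h1
    case b => exact h1.elim
    case g => simp [sees] at h1
    case d => simp [sees] at h1
    case g1 => simp [sees] at h1
    case d1 => simp [sees] at h1
    case d2 => simp [sees] at h1
    case g2 => simp [sees] at h1
    case e t k l =>
      exact (h3 ⟨Pt.chain 2 0, Or.inr <| Or.inr <| Or.inl ⟨0, by omega, rfl⟩,
        Or.inr ⟨by omega, by simp [base]⟩⟩).elim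
    case chain i j =>
      have hi : i ≤ 2 := hp
      interval_cases i
      · simp only [sees] at h1
        rcases h1 with ⟨j', _, h⟩ | ⟨_, hb⟩
        · exact absurd h (by simp)
        · exact absurd hb (by simp [base])
      · simp only [sees] at h1
        rcases h1 with ⟨j', _, h⟩ | ⟨_, hb⟩
        · exact absurd h (by simp)
        · exact absurd hb (by simp [base])
      · rcases Nat.eq_zero_or_pos j with rfl | hj
        · rfl
        · exact (h3 ⟨Pt.chain 2 0, Or.inl ⟨0, by omega, rfl⟩,
            Or.inr ⟨by omega, by simp [base]⟩⟩).elim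
  · rintro rfl
    refine ⟨Or.inr ⟨by omega, by simp [base]⟩,
      ⟨Pt.d2, Or.inr ⟨by omega, by simp [base]⟩, Or.inl rfl⟩, ?_, ?_⟩
    · rintro ⟨q, hq, hr⟩
      rcases hq with ⟨j', hj', rfl⟩ | ⟨_, hb⟩
      · omega
      · simp only [base] at hb
        rcases hb with rfl|rfl|rfl|rfl|rfl|rfl|rfl|rfl <;> simp [sees] at hr
    · rintro ⟨q, r, hq, hr, hS⟩
      rcases hq with ⟨j', hj', rfl⟩ | ⟨_, hb⟩
      · omega
      · simp only [base] at hb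
        rcases hb with rfl|rfl|rfl|rfl|rfl|rfl|rfl|rfl <;> simp only [sees] at hr <;>
          first
            | exact hr
            | (rcases hr with rfl|rfl|rfl|rfl <;> simp [S2] at hS)
            | (rcases hr with rfl|rfl|rfl <;> simp [S2] at hS)
            | (rcases hr with rfl|rfl <;> simp [S2] at hS)
            | (subst hr; simp [S2] at hS)

lemma psat_α₀ {i : Nat} (hi : i ≤ 2) (p : Pt) (hp : okc p) :
    psat p (MFU.α₀ i) ↔ p = Pt.chain i 0 := by
  interval_cases i
  · exact psat_α₀0 p hp
  · exact psat_α₀1 p hp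
  · exact psat_α₀2 p hp

end Chagrov
namespace Chagrov
open Pt MFU

lemma closed_fα : closedF MFU.fα := by simp [MFU.fα, MFU.dia, MFU.top, closedF]
lemma closed_fβ : closedF MFU.fβ := by simp [MFU.fβ, closedF]
lemma closed_fγ : closedF MFU.fγ := by simp [MFU.fγ, MFU.dia, closedF, closed_fα, closed_fβ]
lemma closed_fδ : closedF MFU.fδ := by simp [MFU.fδ, MFU.dia, closedF, closed_fγ, closed_fβ]
lemma closed_fδ₁ : closedF MFU.fδ₁ := by simp [MFU.fδ₁, MFU.dia, closedF, closed_fδ]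
lemma closed_fδ₂ : closedF MFU.fδ₂ := by simp [MFU.fδ₂, MFU.dia, closedF, closed_fδ₁]
lemma closed_fγ₁ : closedF MFU.fγ₁ := by simp [MFU.fγ₁, MFU.dia, closedF, closed_fγ, closed_fδ]
lemma closed_fγ₂ : closedF MFU.fγ₂ := by simp [MFU.fγ₂, MFU.dia, closedF, closed_fγ₁, closed_fδ]

lemma closed_α₀ (i : Nat) : closedF (MFU.α₀ i) := by
  match i with
  | 0 => simp [MFU.α₀, MFU.dia, closedF, closed_fγ, closed_fδ]
  | 1 => simp [MFU.α₀, MFU.dia, closedF, closed_fγ₁, closed_fδ₁]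
  | 2 => simp [MFU.α₀, MFU.dia, closedF, closed_fγ₂, closed_fδ₂]
  | (n+3) => simp [MFU.α₀, closedF]

lemma psat_foldr {p : Pt} {L : List MFU} :
    psat p (L.foldr MFU.and MFU.top) ↔ ∀ φ ∈ L, psat p φ := by
  induction L with
  | nil => simp [MFU.top, psat]
  | cons φ L ih => simp [psat_and, ih]

lemma closed_foldr {L : List MFU} (h : ∀ φ ∈ L, closedF φ) :
    closedF (L.foldr MFU.and MFU.top) := by
  induction L with
  | nil => simp [MFU.top, closedF]
  | cons φ L ih =>
      exact ⟨h φ (by simp), ih fun ψ hψ => h ψ (by simp [hψ])⟩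

lemma closed_others (i : Nat) : closedF (MFU.others i) := by
  refine closed_foldr ?_
  intro φ hφ
  simp only [MFU.others, List.mem_map, List.mem_filter, List.mem_range] at hφ
  obtain ⟨k, _, rfl⟩ := hφ
  exact closed_α₀ k

lemma closed_alpha (i j : Nat) : closedF (MFU.alpha i j) := by
  induction j with
  | zero => exact closed_α₀ i
  | succ j ih =>
      exact ⟨closed_α₀ i, ih, ih, closed_others i⟩

lemma psat_others {i : Nat} (hi : i ≤ 2) (p : Pt) (hp : okc p) :
    psat p (MFU.others i) ↔ ∀ k, k < 3 → k ≠ i → ¬ sees p (Pt.chain k 0) := by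
  rw [MFU.others, psat_foldr]
  constructor
  · intro h k hk hki hs
    have hm : (MFU.neg ((MFU.α₀ k).dia)) ∈
        ((List.range 3).filter (· ≠ i)).map (fun k => MFU.neg ((MFU.α₀ k).dia)) := by
      simp only [List.mem_map, List.mem_filter, List.mem_range]
      exact ⟨k, ⟨hk, by simp [hki]⟩, rfl⟩
    have := h _ hm
    rw [psat_neg, pdia_char (psat_α₀ (by omega)) hp] at this
    exact this ⟨_, hs, rfl⟩
  · intro h φ hφ
    simp only [List.mem_map, List.mem_filter, List.mem_range] at hφ
    obtain ⟨k, ⟨hk, hki⟩, rfl⟩ := hφ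
    rw [psat_neg, pdia_char (psat_α₀ (by omega)) hp]
    rintro ⟨q, hq, rfl⟩
    exact h k hk (by simpa using hki) hq

lemma psat_alpha {i : Nat} (hi : i ≤ 2) (j : Nat) (p : Pt) (hp : okc p) :
    psat p (MFU.alpha i j) ↔ p = Pt.chain i j := by
  induction j generalizing p with
  | zero => exact psat_α₀ hi p hp
  | succ j ih =>
      have h : psat p (MFU.alpha i (j+1)) ↔
          (∃ q, sees p q ∧ q = Pt.chain i 0) ∧ (∃ q, sees p q ∧ q = Pt.chain i j) ∧
          (¬ ∃ q r, sees p q ∧ sees q r ∧ r = Pt.chain i j) ∧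
          (∀ k, k < 3 → k ≠ i → ¬ sees p (Pt.chain k 0)) := by
        simp only [MFU.alpha, psat_and, psat_neg]
        rw [pdia_char (psat_α₀ hi) hp, pdia_char ih hp, pdia2_char ih hp, psat_others hi p hp]
      rw [h]
      simp only [exists_eq_right, exists_eq_right_right]
      constructor
      · rintro ⟨h1, h2, h3, h4⟩
        cases p
        case a => simp [sees] at h2
        case b => exact h2.elim
        case g => simp [sees] at h2
        case d => simp [sees] at h2
        case g1 => simp [sees] at h2
        case g2 => simp [sees] at h2
        case d1 => simp [sees] at h2
        case d2 => simp [sees] at h2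
        case e t k l =>
          exfalso
          rcases Nat.eq_zero_or_pos i with rfl | hipos
          · exact h4 1 (by omega) (by omega) (Or.inr <| Or.inl ⟨0, by omega, rfl⟩)
          · exact h4 0 (by omega) (by omega) (Or.inl ⟨0, by omega, rfl⟩)
        case chain n m =>
          rcases h2 with ⟨j', hj', heq⟩ | ⟨_, hb⟩
          · injection heq with e1 e2
            subst e1; subst e2
            rcases Nat.lt_or_ge (j+1) m with hm | hm
            · exact (h3 ⟨Pt.chain i (j+1), Or.inl ⟨j+1, hm, rfl⟩,
                Or.inl ⟨j, by omega, rfl⟩⟩).elim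
            · have : m = j + 1 := by omega
              rw [this]
          · exact (base_no_chain hb).elim
      · rintro rfl
        refine ⟨Or.inl ⟨0, by omega, rfl⟩, Or.inl ⟨j, by omega, rfl⟩, ?_, ?_⟩
        · rintro ⟨q, hq, hr⟩
          rcases hq with ⟨j', hj', rfl⟩ | ⟨_, hb⟩
          · rcases hr with ⟨j'', hj'', heq⟩ | ⟨_, hb⟩
            · injection heq with e1 e2; omega
            · exact base_no_chain hb
          · exact base_sees_no_chain hi hb hr
        · intro k hk hki hs
          rcases hs with ⟨j', hj', heq⟩ | ⟨_, hb⟩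
          · injection heq with e1 e2; exact hki e1
          · exact base_no_chain hb

end Chagrov
namespace Chagrov
open Pt MFU

lemma sees_no_e {p : Pt} {t k l : Nat} (h : sees p (Pt.e t k l)) : False := by
  cases p
  case a => exact absurd (show Pt.e t k l = Pt.a from h) (by simp)
  case b => exact h
  case g =>
    have h' : Pt.e t k l = Pt.a ∨ Pt.e t k l = Pt.b := h
    rcases h' with h'|h' <;> simp at h'
  case d => exact absurd (show Pt.e t k l = Pt.b from h) (by simp)
  case g1 =>
    have h' : Pt.e t k l = Pt.g ∨ Pt.e t k l = Pt.a ∨ Pt.e t k l = Pt.b := h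
    rcases h' with h'|h'|h' <;> simp at h'
  case g2 =>
    have h' : Pt.e t k l = Pt.g1 ∨ Pt.e t k l = Pt.g ∨ Pt.e t k l = Pt.a ∨ Pt.e t k l = Pt.b := h
    rcases h' with h'|h'|h'|h' <;> simp at h'
  case d1 =>
    have h' : Pt.e t k l = Pt.d ∨ Pt.e t k l = Pt.b := h
    rcases h' with h'|h' <;> simp at h'
  case d2 =>
    have h' : Pt.e t k l = Pt.d1 ∨ Pt.e t k l = Pt.d ∨ Pt.e t k l = Pt.b := h
    rcases h' with h'|h'|h' <;> simp at h'
  case chain i j =>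
    rcases h with ⟨_, _, hh⟩ | ⟨_, hb⟩
    · exact absurd hh (by simp)
    · exact base_no_e hb
  case e =>
    rcases h with ⟨_, _, hh⟩ | ⟨_, _, hh⟩ | ⟨_, _, hh⟩ | hb
    · exact absurd hh (by simp)
    · exact absurd hh (by simp)
    · exact absurd hh (by simp)
    · exact base_no_e hb

lemma sees_chain_chain {i j i' j' : Nat} :
    sees (Pt.chain i j) (Pt.chain i' j') ↔ i' = i ∧ j' < j := by
  constructor
  · rintro (⟨m, hm, heq⟩ | ⟨_, hb⟩)
    · injection heq with e1 e2; subst e1; subst e2; exact ⟨rfl, hm⟩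
    · exact (base_no_chain hb).elim
  · rintro ⟨rfl, h⟩
    exact Or.inl ⟨j', h, rfl⟩

lemma sees_e_chain {t k l i j : Nat} :
    sees (Pt.e t k l) (Pt.chain i j) ↔ (i = 0 ∧ j ≤ t) ∨ (i = 1 ∧ j ≤ k) ∨ (i = 2 ∧ j ≤ l) := by
  constructor
  · rintro (⟨m, hm, heq⟩ | ⟨m, hm, heq⟩ | ⟨m, hm, heq⟩ | hb)
    · injection heq with e1 e2; subst e1; subst e2; exact Or.inl ⟨rfl, hm⟩
    · injection heq with e1 e2; subst e1; subst e2; exact Or.inr <| Or.inl ⟨rfl, hm⟩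
    · injection heq with e1 e2; subst e1; subst e2; exact Or.inr <| Or.inr ⟨rfl, hm⟩
    · exact (base_no_chain hb).elim
  · rintro (⟨rfl, h⟩ | ⟨rfl, h⟩ | ⟨rfl, h⟩)
    · exact Or.inl ⟨j, h, rfl⟩
    · exact Or.inr <| Or.inl ⟨j, h, rfl⟩
    · exact Or.inr <| Or.inr <| Or.inl ⟨j, h, rfl⟩

lemma sees_chain_inv {p : Pt} {i j : Nat} (h : sees p (Pt.chain i j)) :
    (∃ m, p = Pt.chain i m ∧ j < m) ∨
    (∃ t k l, p = Pt.e t k l ∧ ((i = 0 ∧ j ≤ t) ∨ (i = 1 ∧ j ≤ k) ∨ (i = 2 ∧ j ≤ l))) := by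
  cases p <;> simp only [sees] at h
  case a => simp at h
  case g => simp at h
  case d => simp at h
  case g1 => simp at h
  case g2 => simp at h
  case d1 => simp at h
  case d2 => simp at h
  case chain n m =>
      rcases h with ⟨j', hj', heq⟩ | ⟨_, hb⟩
      · injection heq with e1 e2; subst e1; subst e2; exact Or.inl ⟨m, rfl, hj'⟩
      · exact (base_no_chain hb).elim
  case e t k l =>
      refine Or.inr ⟨t, k, l, rfl, ?_⟩
      exact sees_e_chain.mp h

section Model
variable {P : List Instr} {c₀ : Config} {V : Nat → FW P c₀ → Prop}

lemma FR_iff {x y : FW P c₀} : FR P c₀ x y ↔ sees x.1 y.1 := tc_iff_sees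

lemma mdia {x : FW P c₀} {φ : MFU} :
    satU (FR P c₀) V x (MFU.dia φ) ↔ ∃ y : FW P c₀, sees x.1 y.1 ∧ satU (FR P c₀) V y φ := by
  rw [satU_dia]
  exact exists_congr fun y => and_congr_left fun _ => FR_iff

lemma satU_or {W : Type} {R : W → W → Prop} {Vv : Nat → W → Prop} {x : W} {φ ψ : MFU} :
    satU R Vv x (MFU.or φ ψ) ↔ satU R Vv x φ ∨ satU R Vv x ψ := by
  simp only [MFU.or, satU]; tauto

/-- model-level characterization of α-formulas. -/
lemma msat_alpha {i : Nat} (hi : i ≤ 2) (j : Nat) (x : FW P c₀) :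
    satU (FR P c₀) V x (MFU.alpha i j) ↔ x.1 = Pt.chain i j :=
  (sat_eq_psat _ (closed_alpha i j) x).trans (psat_alpha hi j x.1 (ok_okc x.2))

lemma msat_α₀ {i : Nat} (hi : i ≤ 2) (x : FW P c₀) :
    satU (FR P c₀) V x (MFU.α₀ i) ↔ x.1 = Pt.chain i 0 :=
  (sat_eq_psat _ (closed_α₀ i) x).trans (psat_α₀ hi x.1 (ok_okc x.2))

/-- the point a^1_j of the frame. -/
def wc1 (j : Nat) : FW P c₀ := ⟨Pt.chain 1 j, show (1:Nat) ≤ 2 by omega⟩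
/-- the point a^2_j of the frame. -/
def wc2 (j : Nat) : FW P c₀ := ⟨Pt.chain 2 j, show (2:Nat) ≤ 2 by omega⟩

/-- p₁ is true at a^1_k and nowhere visible from it. -/
def P1 (V : Nat → FW P c₀ → Prop) (k : Nat) : Prop :=
  V 0 (wc1 k) ∧ ∀ z : FW P c₀, sees (Pt.chain 1 k) z.1 → ¬ V 0 z

/-- p₂ is true at a^2_l and nowhere visible from it. -/
def T1 (V : Nat → FW P c₀ → Prop) (l : Nat) : Prop :=
  V 1 (wc2 l) ∧ ∀ z : FW P c₀, sees (Pt.chain 2 l) z.1 → ¬ V 1 z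

lemma not_dia_α₀0 {k j : Nat} (hj : j ≤ 2) (hjj : 1 ≤ j) :
    ¬ satU (FR P c₀) V ⟨Pt.chain j k, show j ≤ 2 from hj⟩ (MFU.dia (MFU.α₀ 0)) := by
  refine mt mdia.mp ?_
  rintro ⟨y, hs, hy⟩
  rw [msat_α₀ (by omega)] at hy
  rw [hy] at hs
  rw [sees_chain_chain] at hs
  omega

lemma not_dia_α₀_ne {k j i : Nat} (hj : j ≤ 2) (hi : i ≤ 2) (hne : i ≠ j) :
    ¬ satU (FR P c₀) V ⟨Pt.chain j k, show j ≤ 2 from hj⟩ (MFU.dia (MFU.α₀ i)) := by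
  refine mt mdia.mp ?_
  rintro ⟨y, hs, hy⟩
  rw [msat_α₀ hi] at hy
  rw [hy] at hs
  rw [sees_chain_chain] at hs
  omega

lemma shape_π₁ {y : FW P c₀} (h : satU (FR P c₀) V y MFU.π₁) : ∃ j, y.1 = Pt.chain 1 j := by
  have h1 : satU (FR P c₀) V y (MFU.or (MFU.dia (MFU.α₀ 1)) (MFU.α₀ 1)) := h.1
  have h2 : ¬ satU (FR P c₀) V y (MFU.dia (MFU.α₀ 0)) := h.2.1
  rw [satU_or] at h1
  rcases h1 with h1 | h1
  · rw [mdia] at h1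
    obtain ⟨z, hs, hz⟩ := h1
    rw [msat_α₀ (by omega)] at hz
    rw [hz] at hs
    rcases sees_chain_inv hs with ⟨m, hm, _⟩ | ⟨t, k, l, hm, _⟩
    · exact ⟨m, hm⟩
    · exfalso
      apply h2
      rw [mdia]
      refine ⟨⟨Pt.chain 0 0, show (0:Nat) ≤ 2 by omega⟩, ?_, ?_⟩
      · rw [hm]; exact sees_e_chain.mpr (Or.inl ⟨rfl, by omega⟩)
      · exact (msat_α₀ (i := 0) (by omega) _).mpr rfl
  · rw [msat_α₀ (by omega)] at h1
    exact ⟨0, h1⟩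

lemma shape_π₂ {y : FW P c₀} (h : satU (FR P c₀) V y MFU.π₂) : ∃ j, y.1 = Pt.chain 1 j := by
  have h1 : satU (FR P c₀) V y (MFU.dia (MFU.α₀ 1)) := h.1
  have h2 : ¬ satU (FR P c₀) V y (MFU.dia (MFU.α₀ 0)) := h.2.1
  rw [mdia] at h1
  obtain ⟨z, hs, hz⟩ := h1
  rw [msat_α₀ (by omega)] at hz
  rw [hz] at hs
  rcases sees_chain_inv hs with ⟨m, hm, _⟩ | ⟨t, k, l, hm, _⟩
  · exact ⟨m, hm⟩
  · exfalso
    apply h2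
    rw [mdia]
    refine ⟨⟨Pt.chain 0 0, show (0:Nat) ≤ 2 by omega⟩, ?_, ?_⟩
    · rw [hm]; exact sees_e_chain.mpr (Or.inl ⟨rfl, by omega⟩)
    · exact (msat_α₀ (i := 0) (by omega) _).mpr rfl

lemma shape_τ₁ {y : FW P c₀} (h : satU (FR P c₀) V y MFU.τ₁) : ∃ j, y.1 = Pt.chain 2 j := by
  have h1 : satU (FR P c₀) V y (MFU.or (MFU.dia (MFU.α₀ 2)) (MFU.α₀ 2)) := h.1
  have h2 : ¬ satU (FR P c₀) V y (MFU.dia (MFU.α₀ 0)) := h.2.1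
  rw [satU_or] at h1
  rcases h1 with h1 | h1
  · rw [mdia] at h1
    obtain ⟨z, hs, hz⟩ := h1
    rw [msat_α₀ (by omega)] at hz
    rw [hz] at hs
    rcases sees_chain_inv hs with ⟨m, hm, _⟩ | ⟨t, k, l, hm, _⟩
    · exact ⟨m, hm⟩
    · exfalso
      apply h2
      rw [mdia]
      refine ⟨⟨Pt.chain 0 0, show (0:Nat) ≤ 2 by omega⟩, ?_, ?_⟩
      · rw [hm]; exact sees_e_chain.mpr (Or.inl ⟨rfl, by omega⟩)
      · exact (msat_α₀ (i := 0) (by omega) _).mpr rfl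
  · rw [msat_α₀ (by omega)] at h1
    exact ⟨0, h1⟩

lemma shape_τ₂ {y : FW P c₀} (h : satU (FR P c₀) V y MFU.τ₂) : ∃ j, y.1 = Pt.chain 2 j := by
  have h1 : satU (FR P c₀) V y (MFU.dia (MFU.α₀ 2)) := h.1
  have h2 : ¬ satU (FR P c₀) V y (MFU.dia (MFU.α₀ 0)) := h.2.1
  rw [mdia] at h1
  obtain ⟨z, hs, hz⟩ := h1
  rw [msat_α₀ (by omega)] at hz
  rw [hz] at hs
  rcases sees_chain_inv hs with ⟨m, hm, _⟩ | ⟨t, k, l, hm, _⟩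
  · exact ⟨m, hm⟩
  · exfalso
    apply h2
    rw [mdia]
    refine ⟨⟨Pt.chain 0 0, show (0:Nat) ≤ 2 by omega⟩, ?_, ?_⟩
    · rw [hm]; exact sees_e_chain.mpr (Or.inl ⟨rfl, by omega⟩)
    · exact (msat_α₀ (i := 0) (by omega) _).mpr rfl

lemma shape_α₀1 {y : FW P c₀} (h : satU (FR P c₀) V y (MFU.α₀ 1)) :
    ∃ j, y.1 = Pt.chain 1 j := ⟨0, (msat_α₀ (by omega) y).mp h⟩

lemma shape_α₀2 {y : FW P c₀} (h : satU (FR P c₀) V y (MFU.α₀ 2)) :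
    ∃ j, y.1 = Pt.chain 2 j := ⟨0, (msat_α₀ (by omega) y).mp h⟩

end Model
end Chagrov
namespace Chagrov
open Pt MFU

section Model
variable {P : List Instr} {c₀ : Config} {V : Nat → FW P c₀ → Prop}

lemma pi1_iff (k : Nat) : satU (FR P c₀) V (wc1 k) MFU.π₁ ↔ P1 V k := by
  constructor
  · intro h
    refine ⟨h.2.2.2.1, fun z hz hV => ?_⟩
    exact h.2.2.2.2 (mdia.mpr ⟨z, hz, hV⟩)
  · intro hk
    refine ⟨?_, ?_, ?_, hk.1, ?_⟩
    · rw [satU_or]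
      match k with
      | 0 => exact Or.inr ((msat_α₀ (by omega) _).mpr rfl)
      | (k+1) =>
          exact Or.inl (mdia.mpr ⟨wc1 0, sees_chain_chain.mpr ⟨rfl, by omega⟩,
            (msat_α₀ (by omega) _).mpr rfl⟩)
    · exact not_dia_α₀_ne (by omega) (by omega) (by omega)
    · exact not_dia_α₀_ne (by omega) (by omega) (by omega)
    · intro hd
      rw [mdia] at hd
      obtain ⟨z, hz, hV⟩ := hd
      exact hk.2 z hz hV

lemma pi1_not_below (hk : P1 V k) : ∀ m < k, ¬ satU (FR P c₀) V (wc1 m) MFU.π₁ := by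
  intro m hm hsat
  exact hk.2 (wc1 m) (sees_chain_chain.mpr ⟨rfl, hm⟩) hsat.2.2.2.1

lemma pi2_intro {k : Nat} (hk : P1 V k) : satU (FR P c₀) V (wc1 (k+1)) MFU.π₂ := by
  refine ⟨?_, ?_, ?_, ?_, ?_⟩
  · exact mdia.mpr ⟨wc1 0, sees_chain_chain.mpr ⟨rfl, by omega⟩, (msat_α₀ (by omega) _).mpr rfl⟩
  · exact not_dia_α₀_ne (by omega) (by omega) (by omega)
  · exact not_dia_α₀_ne (by omega) (by omega) (by omega)
  · exact mdia.mpr ⟨wc1 k, sees_chain_chain.mpr ⟨rfl, by omega⟩, hk.1⟩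
  · intro hdd
    rw [mdia] at hdd
    obtain ⟨y, hy, hdy⟩ := hdd
    rw [mdia] at hdy
    obtain ⟨z, hz, hV⟩ := hdy
    have hzk : sees (Pt.chain 1 k) z.1 := by
      rcases hy with ⟨j', hj', hy1⟩ | ⟨_, hb⟩
      · rcases Nat.lt_succ_iff_lt_or_eq.mp hj' with h' | rfl
        · exact sees_trans (sees_chain_chain.mpr ⟨rfl, h'⟩) (hy1 ▸ hz)
        · exact hy1 ▸ hz
      · exact sees_trans (Or.inr ⟨by omega, hb⟩) hz
    exact hk.2 z hzk hV

lemma pi2_elim {y : FW P c₀} (h : satU (FR P c₀) V y MFU.π₂) :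
    ∃ k, y.1 = Pt.chain 1 (k+1) ∧ P1 V k := by
  have h1 : satU (FR P c₀) V y (MFU.dia (MFU.α₀ 1)) := h.1
  have h2 : ¬ satU (FR P c₀) V y (MFU.dia (MFU.α₀ 0)) := h.2.1
  have h4 : satU (FR P c₀) V y (MFU.dia (MFU.var 0)) := h.2.2.2.1
  have h5 : ¬ satU (FR P c₀) V y (MFU.dia (MFU.dia (MFU.var 0))) := h.2.2.2.2
  rw [mdia] at h1
  obtain ⟨z0, hs0, hz0⟩ := h1
  rw [msat_α₀ (by omega)] at hz0
  rw [hz0] at hs0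
  rcases sees_chain_inv hs0 with ⟨m, hym, hm0⟩ | ⟨t, k, l, hym, _⟩
  · match m, hm0 with
    | (k+1), _ =>
      refine ⟨k, hym, ?_⟩
      rw [mdia] at h4
      obtain ⟨w, hw, hVw⟩ := h4
      rw [hym] at hw
      have hP2 : ∀ z : FW P c₀, sees (Pt.chain 1 k) z.1 → ¬ V 0 z := by
        intro z hzk hV
        refine h5 (mdia.mpr ⟨wc1 k, ?_, mdia.mpr ⟨z, hzk, hV⟩⟩)
        rw [hym]; exact sees_chain_chain.mpr ⟨rfl, by omega⟩
      have hwk : w.1 = Pt.chain 1 k := by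
        rcases hw with ⟨j', hj', hwj⟩ | ⟨_, hb⟩
        · rcases Nat.lt_succ_iff_lt_or_eq.mp hj' with h' | rfl
          · exfalso
            refine h5 (mdia.mpr ⟨wc1 (j'+1), ?_, mdia.mpr ⟨w, ?_, hVw⟩⟩)
            · rw [hym]; exact sees_chain_chain.mpr ⟨rfl, by omega⟩
            · rw [hwj]; exact sees_chain_chain.mpr ⟨rfl, by omega⟩
          · exact hwj
        · exfalso
          simp only [base] at hb
          have mk : ∀ (u : FW P c₀), sees (Pt.chain 1 (k+1)) u.1 → sees u.1 w.1 → False := by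
            intro u hu1 hu2
            exact h5 (mdia.mpr ⟨u, by rw [hym]; exact hu1, mdia.mpr ⟨w, hu2, hVw⟩⟩)
          rcases hb with hb|hb|hb|hb|hb|hb
          · exact mk (wc1 0) (sees_chain_chain.mpr ⟨rfl, by omega⟩)
              (by rw [hb]; exact Or.inr ⟨by omega, by simp [base]⟩)
          · exact mk (wc1 0) (sees_chain_chain.mpr ⟨rfl, by omega⟩)
              (by rw [hb]; exact Or.inr ⟨by omega, by simp [base]⟩)
          · exact mk ⟨Pt.g1, trivial⟩ (Or.inr ⟨by omega, by simp [base]⟩)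
              (by rw [hb]; exact Or.inl rfl)
          · exact mk ⟨Pt.d1, trivial⟩ (Or.inr ⟨by omega, by simp [base]⟩)
              (by rw [hb]; exact Or.inl rfl)
          · exact mk ⟨Pt.g, trivial⟩ (Or.inr ⟨by omega, by simp [base]⟩)
              (by rw [hb]; exact Or.inl rfl)
          · exact mk ⟨Pt.g, trivial⟩ (Or.inr ⟨by omega, by simp [base]⟩)
              (by rw [hb]; exact Or.inr rfl)
      have hwe : w = wc1 k := Subtype.ext hwk
      rw [hwe] at hVw
      exact ⟨hVw, hP2⟩
  · exfalso
    apply h2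
    rw [mdia]
    refine ⟨⟨Pt.chain 0 0, show (0:Nat) ≤ 2 by omega⟩, ?_, (msat_α₀ (by omega) _).mpr rfl⟩
    rw [hym]; exact sees_e_chain.mpr (Or.inl ⟨rfl, by omega⟩)

lemma pi2_not_below (hk : P1 V k) : ∀ m < k + 1, ¬ satU (FR P c₀) V (wc1 m) MFU.π₂ := by
  intro m hm hsat
  obtain ⟨k2, heq, hP2⟩ := pi2_elim hsat
  have hmk : m = k2 + 1 := by
    have h' : Pt.chain 1 m = Pt.chain 1 (k2 + 1) := heq
    injection h'
  exact hk.2 (wc1 k2) (sees_chain_chain.mpr ⟨rfl, by omega⟩) hP2.1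

lemma tau1_iff (l : Nat) : satU (FR P c₀) V (wc2 l) MFU.τ₁ ↔ T1 V l := by
  constructor
  · intro h
    refine ⟨h.2.2.2.1, fun z hz hV => ?_⟩
    exact h.2.2.2.2 (mdia.mpr ⟨z, hz, hV⟩)
  · intro hk
    refine ⟨?_, ?_, ?_, hk.1, ?_⟩
    · rw [satU_or]
      match l with
      | 0 => exact Or.inr ((msat_α₀ (by omega) _).mpr rfl)
      | (l+1) =>
          exact Or.inl (mdia.mpr ⟨wc2 0, sees_chain_chain.mpr ⟨rfl, by omega⟩,
            (msat_α₀ (by omega) _).mpr rfl⟩)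
    · exact not_dia_α₀_ne (by omega) (by omega) (by omega)
    · exact not_dia_α₀_ne (by omega) (by omega) (by omega)
    · intro hd
      rw [mdia] at hd
      obtain ⟨z, hz, hV⟩ := hd
      exact hk.2 z hz hV

lemma tau1_not_below (hk : T1 V l) : ∀ m < l, ¬ satU (FR P c₀) V (wc2 m) MFU.τ₁ := by
  intro m hm hsat
  exact hk.2 (wc2 m) (sees_chain_chain.mpr ⟨rfl, hm⟩) hsat.2.2.2.1

lemma tau2_intro {l : Nat} (hk : T1 V l) : satU (FR P c₀) V (wc2 (l+1)) MFU.τ₂ := by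
  refine ⟨?_, ?_, ?_, ?_, ?_⟩
  · exact mdia.mpr ⟨wc2 0, sees_chain_chain.mpr ⟨rfl, by omega⟩, (msat_α₀ (by omega) _).mpr rfl⟩
  · exact not_dia_α₀_ne (by omega) (by omega) (by omega)
  · exact not_dia_α₀_ne (by omega) (by omega) (by omega)
  · exact mdia.mpr ⟨wc2 l, sees_chain_chain.mpr ⟨rfl, by omega⟩, hk.1⟩
  · intro hdd
    rw [mdia] at hdd
    obtain ⟨y, hy, hdy⟩ := hdd
    rw [mdia] at hdy
    obtain ⟨z, hz, hV⟩ := hdy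
    have hzk : sees (Pt.chain 2 l) z.1 := by
      rcases hy with ⟨j', hj', hy1⟩ | ⟨_, hb⟩
      · rcases Nat.lt_succ_iff_lt_or_eq.mp hj' with h' | rfl
        · exact sees_trans (sees_chain_chain.mpr ⟨rfl, h'⟩) (hy1 ▸ hz)
        · exact hy1 ▸ hz
      · exact sees_trans (Or.inr ⟨by omega, hb⟩) hz
    exact hk.2 z hzk hV

lemma tau2_elim {y : FW P c₀} (h : satU (FR P c₀) V y MFU.τ₂) :
    ∃ l, y.1 = Pt.chain 2 (l+1) ∧ T1 V l := by
  have h1 : satU (FR P c₀) V y (MFU.dia (MFU.α₀ 2)) := h.1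
  have h2 : ¬ satU (FR P c₀) V y (MFU.dia (MFU.α₀ 0)) := h.2.1
  have h4 : satU (FR P c₀) V y (MFU.dia (MFU.var 1)) := h.2.2.2.1
  have h5 : ¬ satU (FR P c₀) V y (MFU.dia (MFU.dia (MFU.var 1))) := h.2.2.2.2
  rw [mdia] at h1
  obtain ⟨z0, hs0, hz0⟩ := h1
  rw [msat_α₀ (by omega)] at hz0
  rw [hz0] at hs0
  rcases sees_chain_inv hs0 with ⟨m, hym, hm0⟩ | ⟨t, k, l, hym, _⟩
  · match m, hm0 with
    | (l+1), _ =>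
      refine ⟨l, hym, ?_⟩
      rw [mdia] at h4
      obtain ⟨w, hw, hVw⟩ := h4
      rw [hym] at hw
      have hP2 : ∀ z : FW P c₀, sees (Pt.chain 2 l) z.1 → ¬ V 1 z := by
        intro z hzk hV
        refine h5 (mdia.mpr ⟨wc2 l, ?_, mdia.mpr ⟨z, hzk, hV⟩⟩)
        rw [hym]; exact sees_chain_chain.mpr ⟨rfl, by omega⟩
      have hwk : w.1 = Pt.chain 2 l := by
        rcases hw with ⟨j', hj', hwj⟩ | ⟨_, hb⟩
        · rcases Nat.lt_succ_iff_lt_or_eq.mp hj' with h' | rfl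
          · exfalso
            refine h5 (mdia.mpr ⟨wc2 (j'+1), ?_, mdia.mpr ⟨w, ?_, hVw⟩⟩)
            · rw [hym]; exact sees_chain_chain.mpr ⟨rfl, by omega⟩
            · rw [hwj]; exact sees_chain_chain.mpr ⟨rfl, by omega⟩
          · exact hwj
        · exfalso
          simp only [base] at hb
          have mk : ∀ (u : FW P c₀), sees (Pt.chain 2 (l+1)) u.1 → sees u.1 w.1 → False := by
            intro u hu1 hu2
            exact h5 (mdia.mpr ⟨u, by rw [hym]; exact hu1, mdia.mpr ⟨w, hu2, hVw⟩⟩)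
          rcases hb with hb|hb|hb|hb|hb|hb|hb|hb
          · exact mk (wc2 0) (sees_chain_chain.mpr ⟨rfl, by omega⟩)
              (by rw [hb]; exact Or.inr ⟨by omega, by simp [base]⟩)
          · exact mk (wc2 0) (sees_chain_chain.mpr ⟨rfl, by omega⟩)
              (by rw [hb]; exact Or.inr ⟨by omega, by simp [base]⟩)
          · exact mk ⟨Pt.g2, trivial⟩ (Or.inr ⟨by omega, by simp [base]⟩)
              (by rw [hb]; exact Or.inl rfl)
          · exact mk ⟨Pt.d2, trivial⟩ (Or.inr ⟨by omega, by simp [base]⟩)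
              (by rw [hb]; exact Or.inl rfl)
          · exact mk ⟨Pt.g1, trivial⟩ (Or.inr ⟨by omega, by simp [base]⟩)
              (by rw [hb]; exact Or.inl rfl)
          · exact mk ⟨Pt.d1, trivial⟩ (Or.inr ⟨by omega, by simp [base]⟩)
              (by rw [hb]; exact Or.inl rfl)
          · exact mk ⟨Pt.g, trivial⟩ (Or.inr ⟨by omega, by simp [base]⟩)
              (by rw [hb]; exact Or.inl rfl)
          · exact mk ⟨Pt.g, trivial⟩ (Or.inr ⟨by omega, by simp [base]⟩)
              (by rw [hb]; exact Or.inr rfl)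
      have hwe : w = wc2 l := Subtype.ext hwk
      rw [hwe] at hVw
      exact ⟨hVw, hP2⟩
  · exfalso
    apply h2
    rw [mdia]
    refine ⟨⟨Pt.chain 0 0, show (0:Nat) ≤ 2 by omega⟩, ?_, (msat_α₀ (by omega) _).mpr rfl⟩
    rw [hym]; exact sees_e_chain.mpr (Or.inl ⟨rfl, by omega⟩)

lemma tau2_not_below (hk : T1 V l) : ∀ m < l + 1, ¬ satU (FR P c₀) V (wc2 m) MFU.τ₂ := by
  intro m hm hsat
  obtain ⟨l2, heq, hP2⟩ := tau2_elim hsat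
  have hmk : m = l2 + 1 := by
    have h' : Pt.chain 2 m = Pt.chain 2 (l2 + 1) := heq
    injection h'
  exact hk.2 (wc2 l2) (sees_chain_chain.mpr ⟨rfl, by omega⟩) hP2.1

end Model
end Chagrov
namespace Chagrov
open Pt MFU

section Model
variable {P : List Instr} {c₀ : Config} {V : Nat → FW P c₀ → Prop}

lemma eps_extract {t : Nat} {φ ψ : MFU}
    (hφ : ∀ y : FW P c₀, satU (FR P c₀) V y φ → ∃ j, y.1 = Pt.chain 1 j)
    (hψ : ∀ y : FW P c₀, satU (FR P c₀) V y ψ → ∃ j, y.1 = Pt.chain 2 j)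
    {x : FW P c₀} (hx : satU (FR P c₀) V x (MFU.eps t φ ψ)) :
    ∃ k l, x.1 = Pt.e t k l ∧
      satU (FR P c₀) V (wc1 k) φ ∧ (∀ m < k, ¬ satU (FR P c₀) V (wc1 m) φ) ∧
      satU (FR P c₀) V (wc2 l) ψ ∧ (∀ m < l, ¬ satU (FR P c₀) V (wc2 m) ψ) := by
  obtain ⟨y0, hs0, hy0⟩ := mdia.mp hx.1
  have h2 := hx.2.1
  obtain ⟨y1, hs1, hy1⟩ := mdia.mp hx.2.2.1
  have h4 := hx.2.2.2.1
  obtain ⟨y2, hs2, hy2⟩ := mdia.mp hx.2.2.2.2.1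
  have h6 := hx.2.2.2.2.2
  rw [msat_alpha (by omega)] at hy0
  obtain ⟨k', hk'⟩ := hφ y1 hy1
  obtain ⟨l', hl'⟩ := hψ y2 hy2
  rw [hy0] at hs0
  rw [hk'] at hs1
  rw [hl'] at hs2
  rcases sees_chain_inv hs0 with ⟨m, hxm, _⟩ | ⟨t0, k0, l0, hxe, _⟩
  · exfalso
    rw [hxm, sees_chain_chain] at hs1
    omega
  · rw [hxe, sees_e_chain] at hs0 hs1 hs2
    have ht0 : t ≤ t0 := by
      rcases hs0 with ⟨_, h⟩ | ⟨h, _⟩ | ⟨h, _⟩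
      · exact h
      · exact absurd h (by omega)
      · exact absurd h (by omega)
    have hk0 : k' ≤ k0 := by
      rcases hs1 with ⟨h, _⟩ | ⟨_, h⟩ | ⟨h, _⟩
      · exact absurd h (by omega)
      · exact h
      · exact absurd h (by omega)
    have hl0 : l' ≤ l0 := by
      rcases hs2 with ⟨h, _⟩ | ⟨h, _⟩ | ⟨_, h⟩
      · exact absurd h (by omega)
      · exact absurd h (by omega)
      · exact h
    have htt : t0 = t := by
      by_contra hne
      apply h2
      refine mdia.mpr ⟨⟨Pt.chain 0 (t+1), show (0:Nat) ≤ 2 by omega⟩, ?_,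
        (msat_alpha (by omega) _ _).mpr rfl⟩
      rw [hxe]
      exact sees_e_chain.mpr (Or.inl ⟨rfl, by omega⟩)
    have hkk : k' = k0 := by
      by_contra hne
      apply h4
      refine mdia.mpr ⟨wc1 (k'+1), ?_, mdia.mpr ⟨y1, ?_, hy1⟩⟩
      · rw [hxe]
        exact sees_e_chain.mpr (Or.inr <| Or.inl ⟨rfl, by omega⟩)
      · rw [hk']
        exact sees_chain_chain.mpr ⟨rfl, by omega⟩
    have hll : l' = l0 := by
      by_contra hne
      apply h6
      refine mdia.mpr ⟨wc2 (l'+1), ?_, mdia.mpr ⟨y2, ?_, hy2⟩⟩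
      · rw [hxe]
        exact sees_e_chain.mpr (Or.inr <| Or.inr ⟨rfl, by omega⟩)
      · rw [hl']
        exact sees_chain_chain.mpr ⟨rfl, by omega⟩
    have hy1e : y1 = wc1 k0 := Subtype.ext (show y1.1 = Pt.chain 1 k0 by rw [hk', hkk])
    have hy2e : y2 = wc2 l0 := Subtype.ext (show y2.1 = Pt.chain 2 l0 by rw [hl', hll])
    refine ⟨k0, l0, by rw [hxe, htt], hy1e ▸ hy1, ?_, hy2e ▸ hy2, ?_⟩
    · intro m hm hsat
      apply h4
      refine mdia.mpr ⟨wc1 (m+1), ?_, mdia.mpr ⟨wc1 m, sees_chain_chain.mpr ⟨rfl, by omega⟩, hsat⟩⟩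
      rw [hxe]
      exact sees_e_chain.mpr (Or.inr <| Or.inl ⟨rfl, by omega⟩)
    · intro m hm hsat
      apply h6
      refine mdia.mpr ⟨wc2 (m+1), ?_, mdia.mpr ⟨wc2 m, sees_chain_chain.mpr ⟨rfl, by omega⟩, hsat⟩⟩
      rw [hxe]
      exact sees_e_chain.mpr (Or.inr <| Or.inr ⟨rfl, by omega⟩)

lemma eps_build {t k l : Nat} (hok : Pt.Ok P c₀ (Pt.e t k l)) {φ ψ : MFU}
    (hφ : ∀ y : FW P c₀, satU (FR P c₀) V y φ → ∃ j, y.1 = Pt.chain 1 j)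
    (hψ : ∀ y : FW P c₀, satU (FR P c₀) V y ψ → ∃ j, y.1 = Pt.chain 2 j)
    (h1 : satU (FR P c₀) V (wc1 k) φ) (h2 : ∀ m < k, ¬ satU (FR P c₀) V (wc1 m) φ)
    (h3 : satU (FR P c₀) V (wc2 l) ψ) (h4 : ∀ m < l, ¬ satU (FR P c₀) V (wc2 m) ψ) :
    satU (FR P c₀) V ⟨Pt.e t k l, hok⟩ (MFU.eps t φ ψ) := by
  refine ⟨?_, ?_, ?_, ?_, ?_, ?_⟩
  · exact mdia.mpr ⟨⟨Pt.chain 0 t, show (0:Nat) ≤ 2 by omega⟩,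
      sees_e_chain.mpr (Or.inl ⟨rfl, le_refl _⟩), (msat_alpha (by omega) _ _).mpr rfl⟩
  · intro hd
    obtain ⟨y, hs, hy⟩ := mdia.mp hd
    rw [msat_alpha (by omega)] at hy
    rw [hy] at hs
    rcases sees_e_chain.mp hs with ⟨_, hle⟩ | ⟨h0, _⟩ | ⟨h0, _⟩
    · omega
    · exact absurd h0 (by omega)
    · exact absurd h0 (by omega)
  · exact mdia.mpr ⟨wc1 k, sees_e_chain.mpr (Or.inr <| Or.inl ⟨rfl, le_refl _⟩), h1⟩
  · intro hdd
    obtain ⟨y, hs, hdy⟩ := mdia.mp hdd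
    obtain ⟨z, hz, hzφ⟩ := mdia.mp hdy
    obtain ⟨m, hm⟩ := hφ z hzφ
    rw [hm] at hz
    rcases sees_chain_inv hz with ⟨m', hym', hmm'⟩ | ⟨t', k', l', hye, _⟩
    · rw [hym'] at hs
      rcases sees_e_chain.mp hs with ⟨h0, _⟩ | ⟨_, hle⟩ | ⟨h0, _⟩
      · exact absurd h0 (by omega)
      · have hze : z = wc1 m := Subtype.ext hm
        exact h2 m (by omega) (hze ▸ hzφ)
      · exact absurd h0 (by omega)
    · rw [hye] at hs
      exact sees_no_e hs
  · exact mdia.mpr ⟨wc2 l, sees_e_chain.mpr (Or.inr <| Or.inr ⟨rfl, le_refl _⟩), h3⟩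
  · intro hdd
    obtain ⟨y, hs, hdy⟩ := mdia.mp hdd
    obtain ⟨z, hz, hzψ⟩ := mdia.mp hdy
    obtain ⟨m, hm⟩ := hψ z hzψ
    rw [hm] at hz
    rcases sees_chain_inv hz with ⟨m', hym', hmm'⟩ | ⟨t', k', l', hye, _⟩
    · rw [hym'] at hs
      rcases sees_e_chain.mp hs with ⟨h0, _⟩ | ⟨h0, _⟩ | ⟨_, hle⟩
      · exact absurd h0 (by omega)
      · exact absurd h0 (by omega)
      · have hze : z = wc2 m := Subtype.ext hm
        exact h4 m (by omega) (hze ▸ hzψ)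
    · rw [hye] at hs
      exact sees_no_e hs

end Model
end Chagrov
/-- The formula AxI associated with an instruction I. -/
def AxI : Instr → MFU
  | .inc1 t t' => MFU.imp (MFU.uEx (MFU.eps t MFU.π₁ MFU.τ₁)) (MFU.uEx (MFU.eps t' MFU.π₂ MFU.τ₁))
  | .inc2 t t' => MFU.imp (MFU.uEx (MFU.eps t MFU.π₁ MFU.τ₁)) (MFU.uEx (MFU.eps t' MFU.π₁ MFU.τ₂))
  | .dec1 t t' t'' =>
      MFU.and (MFU.imp (MFU.uEx (MFU.eps t MFU.π₂ MFU.τ₁)) (MFU.uEx (MFU.eps t' MFU.π₁ MFU.τ₁)))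
        (MFU.imp (MFU.uEx (MFU.eps t (MFU.α₀ 1) MFU.τ₁)) (MFU.uEx (MFU.eps t'' (MFU.α₀ 1) MFU.τ₁)))
  | .dec2 t t' t'' =>
      MFU.and (MFU.imp (MFU.uEx (MFU.eps t MFU.π₁ MFU.τ₂)) (MFU.uEx (MFU.eps t' MFU.π₁ MFU.τ₁)))
        (MFU.imp (MFU.uEx (MFU.eps t MFU.π₁ (MFU.α₀ 2))) (MFU.uEx (MFU.eps t'' MFU.π₁ (MFU.α₀ 2))))

/-- AxP = ⋀_{I ∈ P} AxI. -/
def AxP (P : List Instr) : MFU := (P.map AxI).foldr MFU.and MFU.top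

namespace Chagrov
open Pt MFU

lemma satU_foldr {W : Type} {R : W → W → Prop} {Vv : Nat → W → Prop} {x : W} {L : List MFU} :
    satU R Vv x (L.foldr MFU.and MFU.top) ↔ ∀ φ ∈ L, satU R Vv x φ := by
  induction L with
  | nil => simp [MFU.top, satU]
  | cons φ L ih =>
      constructor
      · rintro ⟨h1, h2⟩ ψ hψ
        rcases List.mem_cons.mp hψ with rfl | hψ
        · exact h1
        · exact ih.mp h2 ψ hψ
      · intro h
        exact ⟨h φ (by simp), ih.mpr fun ψ hψ => h ψ (by simp [hψ])⟩

section Model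
variable {P : List Instr} {c₀ : Config} {V : Nat → FW P c₀ → Prop}

lemma reach_of (x : FW P c₀) {t k l : Nat} (h : x.1 = Pt.e t k l) : Reach P c₀ (t, k, l) := by
  have := x.2
  rw [h] at this
  exact this

lemma sat_AxI_inc1 {t t' : Nat} (hI : Instr.inc1 t t' ∈ P) (x : FW P c₀) :
    satU (FR P c₀) V x (AxI (Instr.inc1 t t')) := by
  rw [AxI, satU_imp]
  intro h
  obtain ⟨x0, hx0⟩ := satU_uEx.mp h
  obtain ⟨k, l, hxe, hπ, hπm, hτ, hτm⟩ := eps_extract (fun _ hy => shape_π₁ hy) (fun _ hy => shape_τ₁ hy) hx0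
  have hreach : Reach P c₀ (t, k, l) := reach_of x0 hxe
  have hreach' : Reach P c₀ (t', k+1, l) := hreach.tail ⟨_, hI, ⟨rfl, rfl⟩⟩
  have hP1 : P1 V k := (pi1_iff k).mp hπ
  exact satU_uEx.mpr ⟨⟨Pt.e t' (k+1) l, hreach'⟩,
    eps_build hreach' (fun _ hy => shape_π₂ hy) (fun _ hy => shape_τ₁ hy) (pi2_intro hP1) (pi2_not_below hP1) hτ hτm⟩

lemma sat_AxI_inc2 {t t' : Nat} (hI : Instr.inc2 t t' ∈ P) (x : FW P c₀) :
    satU (FR P c₀) V x (AxI (Instr.inc2 t t')) := by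
  rw [AxI, satU_imp]
  intro h
  obtain ⟨x0, hx0⟩ := satU_uEx.mp h
  obtain ⟨k, l, hxe, hπ, hπm, hτ, hτm⟩ := eps_extract (fun _ hy => shape_π₁ hy) (fun _ hy => shape_τ₁ hy) hx0
  have hreach : Reach P c₀ (t, k, l) := reach_of x0 hxe
  have hreach' : Reach P c₀ (t', k, l+1) := hreach.tail ⟨_, hI, ⟨rfl, rfl⟩⟩
  have hT1 : T1 V l := (tau1_iff l).mp hτ
  exact satU_uEx.mpr ⟨⟨Pt.e t' k (l+1), hreach'⟩,
    eps_build hreach' (fun _ hy => shape_π₁ hy) (fun _ hy => shape_τ₂ hy) hπ hπm (tau2_intro hT1) (tau2_not_below hT1)⟩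

lemma sat_AxI_dec1 {t t' t'' : Nat} (hI : Instr.dec1 t t' t'' ∈ P) (x : FW P c₀) :
    satU (FR P c₀) V x (AxI (Instr.dec1 t t' t'')) := by
  rw [AxI]
  refine ⟨?_, ?_⟩
  · rw [satU_imp]
    intro h
    obtain ⟨x0, hx0⟩ := satU_uEx.mp h
    obtain ⟨k, l, hxe, hπ, hπm, hτ, hτm⟩ := eps_extract (fun _ hy => shape_π₂ hy) (fun _ hy => shape_τ₁ hy) hx0
    obtain ⟨k2, heq, hP⟩ := pi2_elim hπ
    have hk : k = k2 + 1 := by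
      have h' : Pt.chain 1 k = Pt.chain 1 (k2 + 1) := heq
      injection h'
    have hreach : Reach P c₀ (t, k, l) := reach_of x0 hxe
    rw [hk] at hreach
    have hreach' : Reach P c₀ (t', k2, l) :=
      hreach.tail ⟨_, hI, ⟨rfl, Or.inl ⟨by omega, rfl⟩⟩⟩
    exact satU_uEx.mpr ⟨⟨Pt.e t' k2 l, hreach'⟩,
      eps_build hreach' (fun _ hy => shape_π₁ hy) (fun _ hy => shape_τ₁ hy) ((pi1_iff k2).mpr hP) (pi1_not_below hP) hτ hτm⟩
  · rw [satU_imp]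
    intro h
    obtain ⟨x0, hx0⟩ := satU_uEx.mp h
    obtain ⟨k, l, hxe, hα, hαm, hτ, hτm⟩ := eps_extract (fun y hy => shape_α₀1 hy) (fun _ hy => shape_τ₁ hy) hx0
    have hk : k = 0 := by
      have h' : Pt.chain 1 k = Pt.chain 1 0 := (msat_α₀ (by omega) _).mp hα
      injection h'
    have hreach : Reach P c₀ (t, k, l) := reach_of x0 hxe
    rw [hk] at hreach
    have hreach' : Reach P c₀ (t'', 0, l) :=
      hreach.tail ⟨_, hI, ⟨rfl, Or.inr ⟨rfl, rfl⟩⟩⟩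
    exact satU_uEx.mpr ⟨⟨Pt.e t'' 0 l, hreach'⟩,
      eps_build hreach' (fun y hy => shape_α₀1 hy) (fun _ hy => shape_τ₁ hy)
        ((msat_α₀ (by omega) _).mpr rfl) (fun m hm => absurd hm (by omega)) hτ hτm⟩

lemma sat_AxI_dec2 {t t' t'' : Nat} (hI : Instr.dec2 t t' t'' ∈ P) (x : FW P c₀) :
    satU (FR P c₀) V x (AxI (Instr.dec2 t t' t'')) := by
  rw [AxI]
  refine ⟨?_, ?_⟩
  · rw [satU_imp]
    intro h
    obtain ⟨x0, hx0⟩ := satU_uEx.mp h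
    obtain ⟨k, l, hxe, hπ, hπm, hτ, hτm⟩ := eps_extract (fun _ hy => shape_π₁ hy) (fun _ hy => shape_τ₂ hy) hx0
    obtain ⟨l2, heq, hT⟩ := tau2_elim hτ
    have hl : l = l2 + 1 := by
      have h' : Pt.chain 2 l = Pt.chain 2 (l2 + 1) := heq
      injection h'
    have hreach : Reach P c₀ (t, k, l) := reach_of x0 hxe
    rw [hl] at hreach
    have hreach' : Reach P c₀ (t', k, l2) :=
      hreach.tail ⟨_, hI, ⟨rfl, Or.inl ⟨by omega, rfl⟩⟩⟩
    exact satU_uEx.mpr ⟨⟨Pt.e t' k l2, hreach'⟩,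
      eps_build hreach' (fun _ hy => shape_π₁ hy) (fun _ hy => shape_τ₁ hy) hπ hπm ((tau1_iff l2).mpr hT) (tau1_not_below hT)⟩
  · rw [satU_imp]
    intro h
    obtain ⟨x0, hx0⟩ := satU_uEx.mp h
    obtain ⟨k, l, hxe, hπ, hπm, hα, hαm⟩ := eps_extract (fun _ hy => shape_π₁ hy) (fun y hy => shape_α₀2 hy) hx0
    have hl : l = 0 := by
      have h' : Pt.chain 2 l = Pt.chain 2 0 := (msat_α₀ (by omega) _).mp hα
      injection h'
    have hreach : Reach P c₀ (t, k, l) := reach_of x0 hxe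
    rw [hl] at hreach
    have hreach' : Reach P c₀ (t'', k, 0) :=
      hreach.tail ⟨_, hI, ⟨rfl, Or.inr ⟨rfl, rfl⟩⟩⟩
    exact satU_uEx.mpr ⟨⟨Pt.e t'' k 0, hreach'⟩,
      eps_build hreach' (fun _ hy => shape_π₁ hy) (fun y hy => shape_α₀2 hy) hπ hπm
        ((msat_α₀ (by omega) _).mpr rfl) (fun m hm => absurd hm (by omega))⟩

end Model
end Chagrov

/-- 𝔉 ⊨ AxP. -/
theorem frame_sat_AxP :
    ∀ (P : List Instr) (c₀ : Config), Deterministic P →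
      ∀ (V : Nat → FW P c₀ → Prop) (x : FW P c₀),
        satU (FR P c₀) V x (AxP P) := by
  intro P c₀ _ V x
  rw [AxP, Chagrov.satU_foldr]
  intro φ hφ
  simp only [List.mem_map] at hφ
  obtain ⟨I, hI, rfl⟩ := hφ
  cases I with
  | inc1 t t' => exact Chagrov.sat_AxI_inc1 hI x
  | inc2 t t' => exact Chagrov.sat_AxI_inc2 hI x
  | dec1 t t' t'' => exact Chagrov.sat_AxI_dec1 hI x
  | dec2 t t' t'' => exact Chagrov.sat_AxI_dec2 hI x
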